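/- arXiv:2311.08537 — 6 statements merged into one kernel-verified Lean document; each statement's English description precedes it below -/
import Mathlib

section
/- Let d ≥ 1, L₀ > 0 and μ ∈ ℝ. Suppose X : ℝ → ℝ^d is a smooth 1-periodic map satisfying X''(s) = μ X(s) and |X'(s)| = L₀ for all s ∈ ℝ. Then there exist a positive integer n and vectors a, b ∈ ℝ^d with |a| = |b| = L₀/(2πn) and ⟨a, b⟩ = 0 such that μ = −4π²n² and X(s) = cos(2πns)·a + sin(2πns)·b for all s ∈ ℝ. (In other words, the only closed curves evolving self-similarly while remaining normally parametrized are planar circles, possibly multiply covered.) -/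
open Real

lemma osc_unique {E : Type*} [NormedAddCommGroup E] [InnerProductSpace ℝ E]
    {ω : ℝ} (hω : ω ≠ 0) {g : ℝ → E}
    (hg1 : Differentiable ℝ g) (hg2 : Differentiable ℝ (deriv g))
    (hODE : ∀ s, deriv (deriv g) s = -(ω^2) • g s)
    (h0 : g 0 = 0) (h0' : deriv g 0 = 0) (s : ℝ) : g s = 0 := by
  have hDE : ∀ t, HasDerivAt (fun t =>
      (inner ℝ (deriv g t) (deriv g t) : ℝ) + ω^2 * inner ℝ (g t) (g t)) 0 t := by
    intro t
    have hg : HasDerivAt g (deriv g t) t := (hg1 t).hasDerivAt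
    have hg' : HasDerivAt (deriv g) (deriv (deriv g) t) t := (hg2 t).hasDerivAt
    have h3 := (hg'.inner ℝ hg').add ((hg.inner ℝ hg).const_mul (ω^2))
    refine h3.congr_deriv ?_
    rw [hODE, real_inner_smul_left, real_inner_smul_right,
      real_inner_comm (g t) (deriv g t)]
    ring
  have hconst := is_const_of_deriv_eq_zero
    (fun t => (hDE t).differentiableAt) (fun t => (hDE t).deriv) s 0
  have hE0 : (inner ℝ (deriv g 0) (deriv g 0) : ℝ) + ω^2 * inner ℝ (g 0) (g 0) = 0 := by
    rw [h0, h0']; simp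
  have hEs : (inner ℝ (deriv g s) (deriv g s) : ℝ) + ω^2 * inner ℝ (g s) (g s) = 0 :=
    hconst.trans hE0
  have h1 : (0:ℝ) ≤ inner ℝ (deriv g s) (deriv g s) := real_inner_self_nonneg
  have h2 : (0:ℝ) ≤ inner ℝ (g s) (g s) := real_inner_self_nonneg
  have hω2 : (0:ℝ) < ω^2 := by positivity
  have : (inner ℝ (g s) (g s) : ℝ) = 0 := by nlinarith
  exact inner_self_eq_zero.mp this

lemma deriv_periodic {F : Type*} [NormedAddCommGroup F] [NormedSpace ℝ F]
    {X : ℝ → F} (hper : ∀ s : ℝ, X (s + 1) = X s) (s : ℝ) :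
    deriv X (s + 1) = deriv X s := by
  rw [← deriv_comp_add_const X 1 s]
  congr 1
  exact funext hper

/-- The only closed curves satisfying `X'' = μ X` with constant speed `L₀` are
(multiply covered) planar circles. -/
theorem stmt_0 (d : ℕ) (hd : 1 ≤ d) (L₀ : ℝ) (hL₀ : 0 < L₀) (μ : ℝ)
    (X : ℝ → EuclideanSpace ℝ (Fin d))
    (hX : ContDiff ℝ (⊤ : ℕ∞) X)
    (hper : ∀ s : ℝ, X (s + 1) = X s)
    (hODE : ∀ s : ℝ, deriv (deriv X) s = μ • X s)
    (hspeed : ∀ s : ℝ, ‖deriv X s‖ = L₀) :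
    ∃ n : ℕ, 0 < n ∧ ∃ a b : EuclideanSpace ℝ (Fin d),
      ‖a‖ = L₀ / (2 * π * n) ∧ ‖b‖ = L₀ / (2 * π * n) ∧ inner ℝ a b = (0 : ℝ) ∧
      μ = -(4 * π ^ 2 * n ^ 2) ∧
      ∀ s : ℝ, X s = Real.cos (2 * π * n * s) • a + Real.sin (2 * π * n * s) • b := by
  -- smoothness facts
  have hXtop : ContDiff ℝ (⊤ : ℕ∞) X := hX.of_le (by simp)
  rw [contDiff_infty_iff_deriv] at hXtop
  obtain ⟨hX1, hXd⟩ := hXtop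
  rw [contDiff_infty_iff_deriv] at hXd
  obtain ⟨hX2, -⟩ := hXd
  -- step 1 : μ < 0
  have hμ : μ < 0 := by
    by_contra hcon
    push_neg at hcon
    have hDh : ∀ t, HasDerivAt (fun t => (inner ℝ (X t) (deriv X t) : ℝ))
        (L₀^2 + μ * ‖X t‖^2) t := by
      intro t
      have hg : HasDerivAt X (deriv X t) t := (hX1 t).hasDerivAt
      have hg' : HasDerivAt (deriv X) (deriv (deriv X) t) t := (hX2 t).hasDerivAt
      have h1 := hg.inner ℝ hg'
      refine h1.congr_deriv ?_
      rw [hODE, real_inner_smul_right, real_inner_self_eq_norm_sq,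
        real_inner_self_eq_norm_sq, hspeed]
      ring
    obtain ⟨cc, hc1, hc2⟩ := exists_hasDerivAt_eq_slope
      (fun t => (inner ℝ (X t) (deriv X t) : ℝ))
      (fun t => L₀^2 + μ * ‖X t‖^2) one_pos
      (fun t _ => (hDh t).continuousAt.continuousWithinAt)
      (fun t _ => hDh t)
    have hX10 : X 1 = X 0 := by simpa using hper 0
    have hdX10 : deriv X 1 = deriv X 0 := by simpa using deriv_periodic hper 0
    rw [hX10, hdX10] at hc2
    simp at hc2
    nlinarith [mul_nonneg hcon (sq_nonneg ‖X cc‖), hc2]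
  -- tangency : ⟪X, X'⟫ = 0
  have horth : ∀ s, (inner ℝ (X s) (deriv X s) : ℝ) = 0 := by
    intro s
    have hg : HasDerivAt X (deriv X s) s := (hX1 s).hasDerivAt
    have hg' : HasDerivAt (deriv X) (deriv (deriv X) s) s := (hX2 s).hasDerivAt
    have h1 := hg'.inner ℝ hg'
    have h2 : (fun t => (inner ℝ (deriv X t) (deriv X t) : ℝ)) = fun _ => L₀^2 := by
      funext t; rw [real_inner_self_eq_norm_sq, hspeed]
    rw [h2] at h1
    have h4 := h1.unique (hasDerivAt_const s (L₀^2))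
    rw [hODE, real_inner_smul_left, real_inner_smul_right,
      real_inner_comm (X s) (deriv X s)] at h4
    have hμ0 : μ ≠ 0 := hμ.ne
    have h5 : μ * (2 * (inner ℝ (X s) (deriv X s) : ℝ)) = 0 := by linear_combination h4
    have h6 := (mul_eq_zero.mp h5).resolve_left hμ0
    linarith
  -- ‖X s‖ is constant
  have hXconst : ∀ s, ‖X s‖ = ‖X 0‖ := by
    have hD : ∀ u, HasDerivAt (fun t => (inner ℝ (X t) (X t) : ℝ)) 0 u := by
      intro u
      have hg : HasDerivAt X (deriv X u) u := (hX1 u).hasDerivAt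
      have h1 := hg.inner ℝ hg
      refine h1.congr_deriv ?_
      have e1 := horth u
      have e2 : (inner ℝ (deriv X u) (X u) : ℝ) = 0 := by
        rw [real_inner_comm]; exact e1
      linarith
    intro s
    have hc := is_const_of_deriv_eq_zero
      (fun t => (hD t).differentiableAt) (fun t => (hD t).deriv) s 0
    rw [real_inner_self_eq_norm_sq, real_inner_self_eq_norm_sq] at hc
    have h1 := congrArg Real.sqrt hc
    rwa [Real.sqrt_sq (norm_nonneg _), Real.sqrt_sq (norm_nonneg _)] at h1
  -- step 2: explicit solution via energy uniqueness
  obtain ⟨ω, hωdef⟩ : ∃ ω : ℝ, ω = Real.sqrt (-μ) := ⟨_, rfl⟩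
  have hωpos : 0 < ω := hωdef ▸ Real.sqrt_pos.mpr (by linarith)
  have hω2 : ω^2 = -μ := hωdef ▸ Real.sq_sqrt (by linarith)
  obtain ⟨a, ha⟩ : ∃ a : EuclideanSpace ℝ (Fin d), a = X 0 := ⟨_, rfl⟩
  obtain ⟨b, hb⟩ : ∃ b : EuclideanSpace ℝ (Fin d), b = ω⁻¹ • deriv X 0 := ⟨_, rfl⟩
  obtain ⟨C, hC⟩ : ∃ C : ℝ → EuclideanSpace ℝ (Fin d),
      C = fun t => Real.cos (ω*t) • a + Real.sin (ω*t) • b := ⟨_, rfl⟩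
  obtain ⟨C', hC'⟩ : ∃ C' : ℝ → EuclideanSpace ℝ (Fin d),
      C' = fun t => (-Real.sin (ω*t) * ω) • a + (Real.cos (ω*t) * ω) • b := ⟨_, rfl⟩
  have hlin : ∀ s : ℝ, HasDerivAt (fun t : ℝ => ω * t) ω s := fun s => by
    simpa using (hasDerivAt_id s).const_mul ω
  have hDc : ∀ s, HasDerivAt C (C' s) s := by
    intro s
    rw [hC, hC']
    have h1 : HasDerivAt (fun t => Real.cos (ω*t)) (-Real.sin (ω*s) * ω) s :=
      (Real.hasDerivAt_cos (ω*s)).comp s (hlin s)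
    have h2 : HasDerivAt (fun t => Real.sin (ω*t)) (Real.cos (ω*s) * ω) s :=
      (Real.hasDerivAt_sin (ω*s)).comp s (hlin s)
    exact (h1.smul_const a).add (h2.smul_const b)
  have hDc' : ∀ s, HasDerivAt C' (-(ω^2) • C s) s := by
    intro s
    rw [hC, hC']
    have h1 : HasDerivAt (fun t => -Real.sin (ω*t) * ω) (-(Real.cos (ω*s) * ω) * ω) s := by
      have := (((Real.hasDerivAt_sin (ω*s)).comp s (hlin s)).neg).mul_const ω
      refine this.congr_deriv ?_; ring
    have h2 : HasDerivAt (fun t => Real.cos (ω*t) * ω) (-Real.sin (ω*s) * ω * ω) s := by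
      have := ((Real.hasDerivAt_cos (ω*s)).comp s (hlin s)).mul_const ω
      refine this.congr_deriv ?_; ring
    have h3 := (h1.smul_const a).add (h2.smul_const b)
    refine h3.congr_deriv ?_
    symm
    show -(ω^2) • (Real.cos (ω*s) • a + Real.sin (ω*s) • b) = _
    match_scalars <;> ring
  have hDg : ∀ s, HasDerivAt (fun t => X t - C t) (deriv X s - C' s) s := fun s =>
    ((hX1 s).hasDerivAt).sub (hDc s)
  have hdg : deriv (fun t => X t - C t) = fun s => deriv X s - C' s :=
    funext fun s => (hDg s).deriv
  have hμω : μ = -(ω^2) := by linarith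
  have hDg2 : ∀ s, HasDerivAt (deriv (fun t => X t - C t)) (-(ω^2) • (X s - C s)) s := by
    intro s
    rw [hdg]
    have h3 := ((hX2 s).hasDerivAt).sub (hDc' s)
    rw [hODE] at h3
    refine h3.congr_deriv ?_
    rw [hμω, smul_sub]
  have hg0 : X 0 - C 0 = 0 := by
    rw [hC]
    simp [← ha]
  have hg0' : deriv (fun t => X t - C t) 0 = 0 := by
    rw [hdg]
    show deriv X 0 - C' 0 = 0
    rw [hC']
    simp [hb, smul_smul, mul_inv_cancel₀ hωpos.ne']
  have hXC : ∀ s, X s = C s := by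
    intro s
    have h := osc_unique hωpos.ne' (fun t => (hDg t).differentiableAt)
      (fun t => (hDg2 t).differentiableAt) (fun t => (hDg2 t).deriv) hg0 hg0' s
    rwa [sub_eq_zero] at h
  -- norms and orthogonality
  have hnb : ‖b‖ = L₀ / ω := by
    rw [hb, norm_smul, hspeed, norm_inv, Real.norm_eq_abs, abs_of_pos hωpos,
      inv_mul_eq_div]
  have hna : ‖a‖ = L₀ / ω := by
    have e1 : X (π/(2*ω)) = C (π/(2*ω)) := hXC _
    rw [hC] at e1
    have harg : ω * (π/(2*ω)) = π/2 := by
      field_simp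
    rw [show (fun t => Real.cos (ω*t) • a + Real.sin (ω*t) • b) (π/(2*ω))
        = Real.cos (ω*(π/(2*ω))) • a + Real.sin (ω*(π/(2*ω))) • b from rfl,
      harg] at e1
    simp only [Real.cos_pi_div_two, Real.sin_pi_div_two, zero_smul, one_smul,
      zero_add] at e1
    have e2 := hXconst (π/(2*ω))
    rw [e1] at e2
    rw [ha, ← e2, hnb]
  have hab : (inner ℝ a b : ℝ) = 0 := by
    rw [ha, hb, real_inner_smul_right, horth 0, mul_zero]
  -- periodicity forces ω ∈ 2πℤ
  have hcos1 : Real.cos ω = 1 := by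
    have h1 : X 1 = X 0 := by simpa using hper 0
    rw [hXC 1, hC, ← ha] at h1
    rw [show (fun t => Real.cos (ω*t) • a + Real.sin (ω*t) • b) 1
        = Real.cos ω • a + Real.sin ω • b from by simp] at h1
    have h2 := congrArg (fun v : EuclideanSpace ℝ (Fin d) => (inner ℝ v a : ℝ)) h1
    simp only [inner_add_left, real_inner_smul_left] at h2
    have hba0 : (inner ℝ b a : ℝ) = 0 := by rw [real_inner_comm]; exact hab
    rw [hba0, real_inner_self_eq_norm_sq, hna, mul_zero, add_zero] at h2
    have hp : (0:ℝ) < (L₀/ω)^2 := by positivity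
    have h3 : (Real.cos ω - 1) * (L₀/ω)^2 = 0 := by linear_combination h2
    rcases mul_eq_zero.mp h3 with h | h
    · linarith
    · exact absurd h hp.ne'
  obtain ⟨k, hk⟩ := (Real.cos_eq_one_iff ω).mp hcos1
  have hkpos : 0 < k := by
    by_contra hkn
    push_neg at hkn
    have hk0 : (k:ℝ) ≤ 0 := by exact_mod_cast hkn
    nlinarith [Real.pi_pos]
  have hkr : ((k.toNat : ℕ) : ℝ) = (k : ℝ) := by
    exact_mod_cast Int.toNat_of_nonneg hkpos.le
  have hωn : ω = 2 * π * ((k.toNat : ℕ) : ℝ) := by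
    rw [hkr]; linear_combination -hk
  refine ⟨k.toNat, by omega, a, b, ?_, ?_, hab, ?_, ?_⟩
  · rw [hna, hωn]
  · rw [hnb, hωn]
  · rw [hμω, hωn]; ring
  · intro s
    rw [hXC s, hC]
    show Real.cos (ω*s) • a + Real.sin (ω*s) • b = _
    rw [hωn]
end

section
/- Let d ≥ 1, α > 0, T > 0, and let Y : [0,T] × ℝ → ℝ^d be smooth, 1-periodic in the space variable, satisfying ∂ₜY = α·∂ₛₛY, and such that ∂ₛY(t,s) ≠ 0 for all (t,s). Then for every t ∈ (0,T), the length L(t) = ∫₀¹ |∂ₛY(t,σ)| dσ is differentiable in t with d/dt L(t) = −α ∫₀¹ |∂ₛₛY(t,σ) − (⟨∂ₛₛY(t,σ), ∂ₛY(t,σ)⟩/|∂ₛY(t,σ)|²)·∂ₛY(t,σ)|² / |∂ₛY(t,σ)| dσ ≤ 0. In particular, L is nonincreasing on [0,T]. -/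
open Real

section helpers
variable {E : Type*} [NormedAddCommGroup E] [InnerProductSpace ℝ E]

/-- Slice derivative in the second variable. -/
lemma slice_snd {g : ℝ × ℝ → E} {t s : ℝ} (hg : DifferentiableAt ℝ g (t, s)) :
    HasDerivAt (fun σ => g (t, σ)) (fderiv ℝ g (t, s) (0, 1)) s :=
  hg.hasFDerivAt.comp_hasDerivAt s ((hasDerivAt_const s t).prodMk (hasDerivAt_id s))

/-- Slice derivative in the first variable. -/
lemma slice_fst {g : ℝ × ℝ → E} {t s : ℝ} (hg : DifferentiableAt ℝ g (t, s)) :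
    HasDerivAt (fun τ => g (τ, s)) (fderiv ℝ g (t, s) (1, 0)) t :=
  hg.hasFDerivAt.comp_hasDerivAt t ((hasDerivAt_id t).prodMk (hasDerivAt_const t s))

lemma pd_smooth {g : ℝ × ℝ → E} (hg : ContDiff ℝ (⊤ : ℕ∞) g) (v : ℝ × ℝ) :
    ContDiff ℝ (⊤ : ℕ∞) (fun p => fderiv ℝ g p v) :=
  (hg.fderiv_right (by simp)).clm_apply contDiff_const

lemma pd_symm {g : ℝ × ℝ → E} (hg : ContDiff ℝ (⊤ : ℕ∞) g) (q v w : ℝ × ℝ) :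
    fderiv ℝ (fun p => fderiv ℝ g p v) q w = fderiv ℝ (fun p => fderiv ℝ g p w) q v := by
  have hdiff : ∀ y, HasFDerivAt g (fderiv ℝ g y) y := fun y =>
    (hg.differentiable (by simp) y).hasFDerivAt
  have h2 : HasFDerivAt (fderiv ℝ g) (fderiv ℝ (fderiv ℝ g) q) q :=
    ((hg.fderiv_right (m := (⊤ : ℕ∞)) (by simp)).differentiable (by simp) q).hasFDerivAt
  have key : ∀ u : ℝ × ℝ,
      HasFDerivAt (fun p => fderiv ℝ g p u)
        ((ContinuousLinearMap.apply ℝ E u).comp (fderiv ℝ (fderiv ℝ g) q)) q := fun u =>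
    (ContinuousLinearMap.apply ℝ E u).hasFDerivAt.comp q h2
  rw [(key v).fderiv, (key w).fderiv]
  exact second_derivative_symmetric hdiff h2 w v

/-- Derivative of the norm along a curve. -/
lemma hasDerivAt_norm_comp {f : ℝ → E} {f' : E} {x : ℝ} (hf : HasDerivAt f f' x)
    (h0 : f x ≠ 0) :
    HasDerivAt (fun t => ‖f t‖) ((inner ℝ f' (f x) : ℝ) / ‖f x‖) x := by
  have h0n : ‖f x‖ ≠ 0 := norm_ne_zero_iff.mpr h0
  have hsq : (‖f x‖ ^ 2 : ℝ) ≠ 0 := pow_ne_zero _ h0n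
  have h := (Real.hasDerivAt_sqrt hsq).comp x hf.norm_sq
  have heq : (fun t => Real.sqrt (‖f t‖ ^ 2)) = fun t => ‖f t‖ := by
    funext t; rw [Real.sqrt_sq (norm_nonneg _)]
  rw [Function.comp_def, heq] at h
  refine h.congr_deriv ?_
  rw [Real.sqrt_sq (norm_nonneg _)]
  rw [real_inner_comm]
  field_simp

/-- Pythagoras-style identity for the perpendicular part. -/
lemma perp_norm_sq {v w : E} (hv : v ≠ 0) :
    ‖w - ((inner ℝ w v : ℝ) / ‖v‖ ^ 2) • v‖ ^ 2
      = ‖w‖ ^ 2 - (inner ℝ w v : ℝ) ^ 2 / ‖v‖ ^ 2 := by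
  have hvn : (‖v‖ : ℝ) ≠ 0 := norm_ne_zero_iff.mpr hv
  rw [norm_sub_sq_real, real_inner_smul_right, norm_smul, mul_pow]
  rw [Real.norm_eq_abs, sq_abs]
  field_simp
  ring

lemma deriv_periodic_s2 {f : ℝ → E} (hf : ∀ x, f (x + 1) = f x) (s : ℝ) :
    deriv f (s + 1) = deriv f s := by
  conv_rhs => rw [show f = fun x => f (x + 1) from funext fun x => (hf x).symm]
  rw [deriv_comp_add_const]

lemma aux_alg (α a b c n : ℝ) (hn : n ≠ 0) :
    α * (a / n) = α * (((c + a) * n - b * (b / n)) / n ^ 2) - α * ((c - b ^ 2 / n ^ 2) / n) := by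
  field_simp
  ring

end helpers

/-- Under the heat flow of an immersed closed curve, the length
`L(t) = ∫₀¹ |∂ₛY| dσ` is differentiable with derivative
`−α ∫₀¹ |∂ₛₛY^⊥|²/|∂ₛY| dσ ≤ 0`; in particular the length is nonincreasing. -/
theorem stmt_2 (d : ℕ) (hd : 1 ≤ d) (α T : ℝ) (hα : 0 < α) (hT : 0 < T)
    (Y : ℝ → ℝ → EuclideanSpace ℝ (Fin d))
    (hY : ContDiff ℝ (⊤ : ℕ∞) (Function.uncurry Y))
    (hper : ∀ t s : ℝ, Y t (s + 1) = Y t s)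
    (hheat : ∀ t ∈ Set.Icc (0 : ℝ) T, ∀ s : ℝ,
      deriv (fun τ => Y τ s) t = α • deriv (deriv (Y t)) s)
    (himm : ∀ t ∈ Set.Icc (0 : ℝ) T, ∀ s : ℝ, deriv (Y t) s ≠ 0) :
    (∀ t ∈ Set.Ioo (0 : ℝ) T,
      HasDerivAt (fun τ => ∫ σ in (0:ℝ)..1, ‖deriv (Y τ) σ‖)
        (-α * ∫ σ in (0:ℝ)..1,
          ‖deriv (deriv (Y t)) σ -
            ((inner ℝ (deriv (deriv (Y t)) σ) (deriv (Y t) σ) : ℝ) / ‖deriv (Y t) σ‖ ^ 2) •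
              deriv (Y t) σ‖ ^ 2 / ‖deriv (Y t) σ‖) t ∧
      (-α * ∫ σ in (0:ℝ)..1,
          ‖deriv (deriv (Y t)) σ -
            ((inner ℝ (deriv (deriv (Y t)) σ) (deriv (Y t) σ) : ℝ) / ‖deriv (Y t) σ‖ ^ 2) •
              deriv (Y t) σ‖ ^ 2 / ‖deriv (Y t) σ‖) ≤ 0) ∧
    ∀ τ ∈ Set.Icc (0 : ℝ) T, ∀ t ∈ Set.Icc (0 : ℝ) T, τ ≤ t →
      (∫ σ in (0:ℝ)..1, ‖deriv (Y t) σ‖) ≤ ∫ σ in (0:ℝ)..1, ‖deriv (Y τ) σ‖ := by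
  classical
  set f : ℝ × ℝ → EuclideanSpace ℝ (Fin d) := Function.uncurry Y with hfdef
  -- the three space-derivatives as functions on ℝ × ℝ
  set f1 : ℝ × ℝ → EuclideanSpace ℝ (Fin d) := fun p => fderiv ℝ f p (0, 1) with hf1def
  have hf1 : ContDiff ℝ (⊤ : ℕ∞) f1 := pd_smooth hY (0, 1)
  set f2 : ℝ × ℝ → EuclideanSpace ℝ (Fin d) := fun p => fderiv ℝ f1 p (0, 1) with hf2def
  have hf2 : ContDiff ℝ (⊤ : ℕ∞) f2 := pd_smooth hf1 (0, 1)
  set f3 : ℝ × ℝ → EuclideanSpace ℝ (Fin d) := fun p => fderiv ℝ f2 p (0, 1) with hf3def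
  have hf3 : ContDiff ℝ (⊤ : ℕ∞) f3 := pd_smooth hf2 (0, 1)
  -- identification with deriv's of Y
  have hV : ∀ t s : ℝ, HasDerivAt (Y t) (f1 (t, s)) s := fun t s =>
    slice_snd (hY.differentiable (by simp) _)
  have hVeq : ∀ t : ℝ, deriv (Y t) = fun s => f1 (t, s) := fun t =>
    funext fun s => (hV t s).deriv
  have hA : ∀ t s : ℝ, HasDerivAt (deriv (Y t)) (f2 (t, s)) s := by
    intro t s
    rw [hVeq t]
    exact slice_snd (hf1.differentiable (by simp) _)
  have hAeq : ∀ t : ℝ, deriv (deriv (Y t)) = fun s => f2 (t, s) := fun t =>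
    funext fun s => (hA t s).deriv
  -- nonvanishing
  have hne : ∀ t ∈ Set.Icc (0 : ℝ) T, ∀ s : ℝ, f1 (t, s) ≠ 0 := by
    intro t ht s
    have := himm t ht s
    rwa [hVeq t] at this
  -- key identity: ∂ₜ f1 = α • f3 for t ∈ [0,T]
  have hkey : ∀ t ∈ Set.Icc (0 : ℝ) T, ∀ s : ℝ,
      fderiv ℝ f1 (t, s) (1, 0) = α • f3 (t, s) := by
    intro t ht s
    have hsym : fderiv ℝ f1 (t, s) (1, 0)
        = fderiv ℝ (fun p => fderiv ℝ f p (1, 0)) (t, s) (0, 1) :=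
      pd_symm hY (t, s) (0, 1) (1, 0)
    rw [hsym]
    have hg0 : ContDiff ℝ (⊤ : ℕ∞) (fun p => fderiv ℝ f p (1, 0)) := pd_smooth hY (1, 0)
    have hslice : HasDerivAt (fun σ => fderiv ℝ f (t, σ) (1, 0))
        (fderiv ℝ (fun p => fderiv ℝ f p (1, 0)) (t, s) (0, 1)) s :=
      slice_snd (hg0.differentiable (by simp) _)
    have heq : (fun σ => fderiv ℝ f (t, σ) (1, 0)) = fun σ => α • f2 (t, σ) := by
      funext σ
      have h1 : HasDerivAt (fun τ => Y τ σ) (fderiv ℝ f (t, σ) (1, 0)) t :=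
        slice_fst (hY.differentiable (by simp) _)
      have h2 := h1.deriv
      rw [hheat t ht σ] at h2
      simp only [hAeq t] at h2
      exact h2.symm
    have h2 : HasDerivAt (fun σ => α • f2 (t, σ)) (α • f3 (t, s)) s :=
      (slice_snd (hf2.differentiable (by simp) _)).const_smul α
    rw [heq] at hslice
    exact hslice.unique h2
  -- time derivative of f1 slices
  have hTf1 : ∀ t ∈ Set.Icc (0 : ℝ) T, ∀ s : ℝ,
      HasDerivAt (fun τ => f1 (τ, s)) (α • f3 (t, s)) t := by
    intro t ht s
    have := slice_fst (g := f1) (hf1.differentiable (by simp) (t, s))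
    rwa [hkey t ht s] at this
  -- the τ-derivative of the norm integrand
  set h : ℝ × ℝ → ℝ := fun p => α * ((inner ℝ (f3 p) (f1 p) : ℝ) / ‖f1 p‖) with hhdef
  have hnd : ∀ t ∈ Set.Icc (0 : ℝ) T, ∀ s : ℝ,
      HasDerivAt (fun τ => ‖f1 (τ, s)‖) (h (t, s)) t := by
    intro t ht s
    have := hasDerivAt_norm_comp (hTf1 t ht s) (hne t ht s)
    rwa [real_inner_smul_left, mul_div_assoc] at this
  -- continuity of h on the nonvanishing set
  have hcont_inner : Continuous (fun p : ℝ × ℝ => (inner ℝ (f3 p) (f1 p) : ℝ)) :=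
    hf3.continuous.inner hf1.continuous
  have hcont_h : ContinuousOn h {p : ℝ × ℝ | f1 p ≠ 0} := by
    apply ContinuousOn.mul continuousOn_const
    exact ContinuousOn.div hcont_inner.continuousOn hf1.continuous.norm.continuousOn
      (fun p hp => norm_ne_zero_iff.mpr hp)
  -- differentiation under the integral sign
  have hmain : ∀ t ∈ Set.Ioo (0:ℝ) T,
      HasDerivAt (fun τ => ∫ σ in (0:ℝ)..1, ‖f1 (τ, σ)‖) (∫ σ in (0:ℝ)..1, h (t, σ)) t := by
    intro t ht
    obtain ⟨ε, hε, hball⟩ := Metric.isOpen_iff.mp isOpen_Ioo t ht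
    have hεhalf : (0:ℝ) < ε/2 := by linarith
    have hcb : Metric.closedBall t (ε/2) ⊆ Set.Ioo 0 T :=
      (Metric.closedBall_subset_ball (by linarith)).trans hball
    obtain ⟨C, hC⟩ := IsCompact.exists_bound_of_continuousOn
      ((isCompact_closedBall t (ε/2)).prod isCompact_Icc)
      (hcont_h.mono (fun p hp => hne p.1 (Set.Ioo_subset_Icc_self (hcb hp.1)) p.2))
    have htIcc : t ∈ Set.Icc (0:ℝ) T := Set.Ioo_subset_Icc_self ht
    have hcn : ∀ x : ℝ, Continuous (fun σ => ‖f1 (x, σ)‖) := fun x =>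
      (hf1.continuous.comp (Continuous.prodMk_right x)).norm
    refine (intervalIntegral.hasDerivAt_integral_of_dominated_loc_of_deriv_le
      (F := fun τ σ => ‖f1 (τ, σ)‖) (F' := fun τ σ => h (τ, σ)) (bound := fun _ => C)
      (Metric.ball_mem_nhds t hεhalf) ?_ ?_ ?_ ?_ ?_ ?_).2
    · exact Filter.Eventually.of_forall fun x => (hcn x).aestronglyMeasurable
    · exact (hcn t).intervalIntegrable 0 1
    · have : Continuous (fun σ => h (t, σ)) := by
        apply continuous_const.mul
        exact Continuous.div (hcont_inner.comp (Continuous.prodMk_right t)) (hcn t)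
          (fun σ => norm_ne_zero_iff.mpr (hne t htIcc σ))
      exact this.aestronglyMeasurable
    · refine Filter.Eventually.of_forall fun σ hσ x hx => hC (x, σ) ⟨Metric.ball_subset_closedBall hx, ?_⟩
      rw [Set.uIoc_of_le zero_le_one] at hσ
      exact Set.Ioc_subset_Icc_self hσ
    · exact intervalIntegrable_const
    · exact Filter.Eventually.of_forall fun σ hσ x hx =>
        hnd x (Set.Ioo_subset_Icc_self (hcb (Metric.ball_subset_closedBall hx))) σ
  -- the value of the derivative: integration by parts
  have hval : ∀ t ∈ Set.Icc (0:ℝ) T,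
      (∫ σ in (0:ℝ)..1, h (t, σ))
        = -α * ∫ σ in (0:ℝ)..1,
            ‖f2 (t, σ) - ((inner ℝ (f2 (t, σ)) (f1 (t, σ)) : ℝ) / ‖f1 (t, σ)‖ ^ 2) • f1 (t, σ)‖ ^ 2
              / ‖f1 (t, σ)‖ := by
    intro t ht
    have hn0 : ∀ σ : ℝ, ‖f1 (t, σ)‖ ≠ 0 := fun σ => norm_ne_zero_iff.mpr (hne t ht σ)
    have cf1 : Continuous (fun σ => f1 (t, σ)) := hf1.continuous.comp (Continuous.prodMk_right t)
    have cf2 : Continuous (fun σ => f2 (t, σ)) := hf2.continuous.comp (Continuous.prodMk_right t)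
    have cf3 : Continuous (fun σ => f3 (t, σ)) := hf3.continuous.comp (Continuous.prodMk_right t)
    have cn : Continuous (fun σ => ‖f1 (t, σ)‖) := cf1.norm
    set φ : ℝ → ℝ := fun σ => (inner ℝ (f2 (t, σ)) (f1 (t, σ)) : ℝ) / ‖f1 (t, σ)‖ with hφdef
    set D : ℝ → ℝ := fun σ =>
      ((((inner ℝ (f2 (t, σ)) (f2 (t, σ)) : ℝ) + (inner ℝ (f3 (t, σ)) (f1 (t, σ)) : ℝ))
          * ‖f1 (t, σ)‖)
        - (inner ℝ (f2 (t, σ)) (f1 (t, σ)) : ℝ)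
            * ((inner ℝ (f2 (t, σ)) (f1 (t, σ)) : ℝ) / ‖f1 (t, σ)‖)) / ‖f1 (t, σ)‖ ^ 2
      with hDdef
    set G : ℝ → ℝ := fun σ =>
      ‖f2 (t, σ) - ((inner ℝ (f2 (t, σ)) (f1 (t, σ)) : ℝ) / ‖f1 (t, σ)‖ ^ 2) • f1 (t, σ)‖ ^ 2
        / ‖f1 (t, σ)‖ with hGdef
    have hφD : ∀ σ : ℝ, HasDerivAt φ (D σ) σ := by
      intro σ
      have hf1' : HasDerivAt (fun σ => f1 (t, σ)) (f2 (t, σ)) σ :=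
        slice_snd (hf1.differentiable (by simp) _)
      have hf2' : HasDerivAt (fun σ => f2 (t, σ)) (f3 (t, σ)) σ :=
        slice_snd (hf2.differentiable (by simp) _)
      have ha : HasDerivAt (fun σ => (inner ℝ (f2 (t, σ)) (f1 (t, σ)) : ℝ))
          ((inner ℝ (f2 (t, σ)) (f2 (t, σ)) : ℝ) + (inner ℝ (f3 (t, σ)) (f1 (t, σ)) : ℝ)) σ :=
        HasDerivAt.inner ℝ hf2' hf1'
      have hb : HasDerivAt (fun σ => ‖f1 (t, σ)‖)
          ((inner ℝ (f2 (t, σ)) (f1 (t, σ)) : ℝ) / ‖f1 (t, σ)‖) σ :=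
        hasDerivAt_norm_comp hf1' (hne t ht σ)
      exact ha.div hb (hn0 σ)
    have cD : Continuous D := by
      apply Continuous.div
      · exact (((cf2.inner cf2).add (cf3.inner cf1)).mul cn).sub
          ((cf2.inner cf1).mul ((cf2.inner cf1).div cn hn0))
      · exact cn.pow 2
      · exact fun σ => pow_ne_zero _ (hn0 σ)
    have cG : Continuous G := by
      apply Continuous.div _ cn hn0
      exact ((cf2.sub ((((cf2.inner cf1)).div (cn.pow 2)
        (fun σ => pow_ne_zero _ (hn0 σ))).smul cf1)).norm).pow 2
    -- periodicity
    have hdper : ∀ x : ℝ, deriv (Y t) (x + 1) = deriv (Y t) x := deriv_periodic_s2 (hper t)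
    have hp1 : ∀ σ : ℝ, f1 (t, σ + 1) = f1 (t, σ) := by
      intro σ
      have := hdper σ
      simpa only [hVeq t] using this
    have hp2 : ∀ σ : ℝ, f2 (t, σ + 1) = f2 (t, σ) := by
      intro σ
      have := deriv_periodic_s2 hdper σ
      simpa only [hAeq t] using this
    have hDint : ∫ σ in (0:ℝ)..1, D σ = φ 1 - φ 0 :=
      intervalIntegral.integral_eq_sub_of_hasDerivAt (fun σ _ => hφD σ)
        (cD.intervalIntegrable 0 1)
    have hφper : φ 1 = φ 0 := by
      simp only [hφdef]
      rw [show (1:ℝ) = 0 + 1 by norm_num, hp1 0, hp2 0]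
    rw [hφper, sub_self] at hDint
    -- pointwise identity
    have hpt : ∀ σ : ℝ, h (t, σ) = α * D σ - α * G σ := by
      intro σ
      have hps := perp_norm_sq (v := f1 (t, σ)) (w := f2 (t, σ)) (hne t ht σ)
      simp only [hhdef, hDdef, hGdef]
      rw [hps, real_inner_self_eq_norm_sq]
      exact aux_alg α _ _ (‖f2 (t, σ)‖ ^ 2) _ (hn0 σ)
    calc (∫ σ in (0:ℝ)..1, h (t, σ))
        = ∫ σ in (0:ℝ)..1, (α * D σ - α * G σ) := by
          exact intervalIntegral.integral_congr (fun σ _ => hpt σ)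
      _ = (∫ σ in (0:ℝ)..1, α * D σ) - ∫ σ in (0:ℝ)..1, α * G σ := by
          exact intervalIntegral.integral_sub
            ((continuous_const.mul cD).intervalIntegrable 0 1)
            ((continuous_const.mul cG).intervalIntegrable 0 1)
      _ = α * (∫ σ in (0:ℝ)..1, D σ) - α * ∫ σ in (0:ℝ)..1, G σ := by
          rw [intervalIntegral.integral_const_mul, intervalIntegral.integral_const_mul]
      _ = -α * ∫ σ in (0:ℝ)..1, G σ := by rw [hDint]; ring
  -- nonnegativity of the energy integrals
  have hGnonneg : ∀ t : ℝ, (0:ℝ) ≤ ∫ σ in (0:ℝ)..1,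
      ‖f2 (t, σ) - ((inner ℝ (f2 (t, σ)) (f1 (t, σ)) : ℝ) / ‖f1 (t, σ)‖ ^ 2) • f1 (t, σ)‖ ^ 2
        / ‖f1 (t, σ)‖ := by
    intro t
    apply intervalIntegral.integral_nonneg zero_le_one
    intro u hu
    positivity
  have hAeq' : ∀ t : ℝ, deriv (fun s => f1 (t, s)) = fun s => f2 (t, s) := by
    intro t
    rw [← hVeq t]
    exact hAeq t
  simp only [hVeq, hAeq']
  refine ⟨fun t ht => ⟨?_, ?_⟩, ?_⟩
  · rw [← hval t (Set.Ioo_subset_Icc_self ht)]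
    exact hmain t ht
  · have h1 := mul_nonneg hα.le (hGnonneg t)
    linarith
  · have hcontL : Continuous (fun τ => ∫ σ in (0:ℝ)..1, ‖f1 (τ, σ)‖) := by
      have hcu : Continuous (Function.uncurry fun (x σ : ℝ) => ‖f1 (x, σ)‖) :=
        hf1.continuous.norm
      exact intervalIntegral.continuous_parametric_intervalIntegral_of_continuous' hcu 0 1
    have hanti : AntitoneOn (fun τ => ∫ σ in (0:ℝ)..1, ‖f1 (τ, σ)‖) (Set.Icc 0 T) := by
      apply antitoneOn_of_deriv_nonpos (convex_Icc 0 T) hcontL.continuousOn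
      · intro x hx
        rw [interior_Icc] at hx
        exact (hmain x hx).differentiableAt.differentiableWithinAt
      · intro x hx
        rw [interior_Icc] at hx
        rw [(hmain x hx).deriv, hval x (Set.Ioo_subset_Icc_self hx)]
        have := mul_nonneg hα.le (hGnonneg x)
        linarith
    intro τ hτ t ht hle
    exact hanti hτ ht hle
end

section
/- Let d ≥ 1, α > 0, L > 0, T > 0, and let Y : [0,T] × ℝ → ℝ^d be smooth, 1-periodic in the space variable, satisfying ∂ₜY = α·∂ₛₛY, and such that |∂ₛY(0,σ)| = L for all σ ∈ ℝ (i.e., Y(0,·) is a constant-speed parametrization of a closed curve of length L). Then for all t ∈ [0,T], ∫₀¹ |∂ₛY(t,σ)| dσ ≤ e^{−4π²αt}·L. In particular, with α = 1/L², after time h the length is at most e^{−4π²h/L²}·L. -/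
open Real MeasureTheory intervalIntegral Set
open scoped RealInnerProductSpace

instance fact_zero_lt_one' : Fact ((0:ℝ) < 1) := ⟨one_pos⟩

section aux

variable {E' : Type*} [NormedAddCommGroup E'] [NormedSpace ℝ E']

lemma sliceS {F : ℝ × ℝ → E'} (hF : ContDiff ℝ (⊤ : ℕ∞) F) (t s : ℝ) :
    HasDerivAt (fun s' => F (t, s')) (fderiv ℝ F (t, s) (0, 1)) s :=
  (hF.differentiable (by simp) (t, s)).hasFDerivAt.comp_hasDerivAt s
    ((hasDerivAt_const s t).prodMk (hasDerivAt_id s))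

lemma sliceT {F : ℝ × ℝ → E'} (hF : ContDiff ℝ (⊤ : ℕ∞) F) (t s : ℝ) :
    HasDerivAt (fun t' => F (t', s)) (fderiv ℝ F (t, s) (1, 0)) t :=
  (hF.differentiable (by simp) (t, s)).hasFDerivAt.comp_hasDerivAt t
    ((hasDerivAt_id t).prodMk (hasDerivAt_const t s))

lemma smoothD {F : ℝ × ℝ → E'} (hF : ContDiff ℝ (⊤ : ℕ∞) F) (v : ℝ × ℝ) :
    ContDiff ℝ (⊤ : ℕ∞) (fun p => fderiv ℝ F p v) :=
  (hF.fderiv_right (by simp)).clm_apply contDiff_const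

lemma clairaut {F : ℝ × ℝ → E'} (hF : ContDiff ℝ (⊤ : ℕ∞) F) (p v w : ℝ × ℝ) :
    fderiv ℝ (fun q => fderiv ℝ F q v) p w = fderiv ℝ (fun q => fderiv ℝ F q w) p v := by
  have hΦ : Differentiable ℝ (fderiv ℝ F) := (hF.fderiv_right (m := (⊤ : ℕ∞)) (by simp)).differentiable (by simp)
  have key : ∀ u z : ℝ × ℝ, fderiv ℝ (fun q => fderiv ℝ F q u) p z
      = fderiv ℝ (fderiv ℝ F) p z u := by
    intro u z
    have h1 : HasFDerivAt (fun q => fderiv ℝ F q u)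
        ((ContinuousLinearMap.apply ℝ E' u).comp (fderiv ℝ (fderiv ℝ F) p)) p :=
      (ContinuousLinearMap.apply ℝ E' u).hasFDerivAt.comp p (hΦ p).hasFDerivAt
    rw [h1.fderiv]
    rfl
  rw [key, key]
  exact second_derivative_symmetric (fun y => (hF.differentiable (by simp) y).hasFDerivAt)
    (hΦ p).hasFDerivAt w v

lemma fderiv_per {F : ℝ × ℝ → E'} (hF : Differentiable ℝ F) {c : ℝ × ℝ}
    (hp : ∀ p, F (p + c) = F p) (p : ℝ × ℝ) : fderiv ℝ F (p + c) = fderiv ℝ F p := by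
  have h1 : HasFDerivAt (fun q => F (q + c)) (fderiv ℝ F (p + c)) p := by
    have h := (hF (p + c)).hasFDerivAt.comp p ((hasFDerivAt_id p).add_const c)
    exact h
  rw [funext hp] at h1
  exact (h1.fderiv).symm

lemma parseval_aux (g : ℝ → ℂ) (hc : Continuous g) (hper : ∀ x, g (x + 1) = g x) :
    Summable (fun n : ℤ => ‖fourierCoeffOn one_pos g n‖ ^ 2) ∧
    ∑' n : ℤ, ‖fourierCoeffOn one_pos g n‖ ^ 2 = ∫ x in (0:ℝ)..1, ‖g x‖ ^ 2 := by
  have g1 : g 0 = g 1 := by simpa using (hper 0).symm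
  set G : AddCircle (1:ℝ) → ℂ := AddCircle.liftIco 1 0 g with hG
  have hGc : Continuous G := AddCircle.liftIco_zero_continuous g1 hc.continuousOn
  set Gc : C(AddCircle (1:ℝ), ℂ) := ⟨G, hGc⟩ with hGcdef
  set fL := ContinuousMap.toLp (E := ℂ) 2 AddCircle.haarAddCircle ℂ Gc with hfL
  have hcoeff : ∀ n : ℤ, fourierCoeff (T := 1) fL n = fourierCoeffOn one_pos g n := by
    intro n
    rw [fourierCoeff_toLp]
    have h1 : fourierCoeff (T := 1) (Gc : AddCircle (1:ℝ) → ℂ) n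
        = fourierCoeffOn (lt_add_of_pos_right (0:ℝ) one_pos) g n :=
      fourierCoeff_liftIco_eq (T := 1) (a := 0) g n
    rw [h1, fourierCoeffOn_eq_integral, fourierCoeffOn_eq_integral]
    norm_num
  constructor
  · have : Summable fun n : ℤ => ‖fourierBasis.repr fL n‖ ^ 2 := by
      have := ((lp.memℓp (fourierBasis.repr fL)).summable (p := 2) (by norm_num))
      simpa [ENNReal.toReal_ofNat, Real.rpow_natCast] using this
    simp_rw [fourierBasis_repr] at this
    simpa [hcoeff] using this
  · have hP := tsum_sq_fourierCoeff fL
    simp_rw [hcoeff] at hP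
    rw [hP]
    have hae : (fun t : AddCircle (1:ℝ) => ‖fL t‖ ^ 2)
        =ᵐ[AddCircle.haarAddCircle] fun t => ‖G t‖ ^ 2 := by
      filter_upwards [ContinuousMap.coeFn_toLp (p := 2) (μ := AddCircle.haarAddCircle) (𝕜 := ℂ) Gc]
        with t ht using by rw [ht]; rfl
    rw [integral_congr_ae hae]
    have hvol : (volume : Measure (AddCircle (1:ℝ))) = AddCircle.haarAddCircle := by
      rw [AddCircle.volume_eq_smul_haarAddCircle]; simp
    rw [← hvol]
    have := AddCircle.intervalIntegral_preimage (T := 1) 0 (fun z => ‖G z‖ ^ 2)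
    rw [← this]
    rw [show (0:ℝ) + 1 = 1 by norm_num]
    refine integral_congr fun x hx => ?_
    rw [uIcc_of_le one_pos.le] at hx
    rcases eq_or_lt_of_le hx.2 with h | h
    · have : G ((1:ℝ) : AddCircle (1:ℝ)) = g 0 := by
        have h2 : ((1:ℝ) : AddCircle (1:ℝ)) = ((0:ℝ) : AddCircle (1:ℝ)) := by
          simp [AddCircle.coe_eq_zero_iff]
        rw [h2]
        exact AddCircle.liftIco_zero_coe_apply (by constructor <;> norm_num)
      rw [h, this, g1]
    · rw [hG, AddCircle.liftIco_zero_coe_apply ⟨hx.1, h⟩]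

lemma wirtinger (f f' : ℝ → ℝ) (hd : ∀ x, HasDerivAt f (f' x) x)
    (hc' : Continuous f') (hper : ∀ x, f (x + 1) = f x)
    (hmean : (∫ x in (0:ℝ)..1, f x) = 0) :
    4 * π ^ 2 * ∫ x in (0:ℝ)..1, f x ^ 2 ≤ ∫ x in (0:ℝ)..1, f' x ^ 2 := by
  have hfc : Continuous f := continuous_iff_continuousAt.2 fun x => (hd x).continuousAt
  have hper' : ∀ x, f' (x + 1) = f' x := by
    intro x
    have h1 : HasDerivAt (fun y => f (y + 1)) (f' (x + 1) * 1) x :=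
      (hd (x + 1)).comp x ((hasDerivAt_id x).add_const 1)
    have h2 : (fun y => f (y + 1)) = f := funext hper
    rw [h2] at h1
    simpa using h1.unique (hd x)
  set g : ℝ → ℂ := fun x => (f x : ℂ) with hgdef
  set g' : ℝ → ℂ := fun x => (f' x : ℂ) with hg'def
  have hgd : ∀ x, HasDerivAt g (g' x) x := fun x => (hd x).ofReal_comp
  have hgc : Continuous g := Complex.continuous_ofReal.comp hfc
  have hgc' : Continuous g' := Complex.continuous_ofReal.comp hc'
  obtain ⟨Sg, Pg⟩ := parseval_aux g hgc (fun x => by simp [hgdef, hper x])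
  obtain ⟨Sg', Pg'⟩ := parseval_aux g' hgc' (fun x => by simp [hg'def, hper' x])
  have hf10 : f 1 = f 0 := by simpa using hper 0
  have hg10 : g 1 - g 0 = 0 := by simp [hgdef, hf10]
  have hc0 : fourierCoeffOn one_pos g 0 = 0 := by
    rw [fourierCoeffOn_eq_integral]
    simp only [neg_zero, fourier_zero, one_smul, sub_zero, one_div]
    rw [show (∫ x in (0:ℝ)..1, g x) = ((∫ x in (0:ℝ)..1, f x : ℝ) : ℂ) from ?_]
    · rw [hmean]; simp
    · rw [hgdef]; exact intervalIntegral.integral_ofReal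
  have hrel : ∀ n : ℤ, n ≠ 0 →
      ‖fourierCoeffOn one_pos g' n‖ ^ 2 =
        4 * π ^ 2 * (n : ℝ) ^ 2 * ‖fourierCoeffOn one_pos g n‖ ^ 2 := by
    intro n hn
    have key := fourierCoeffOn_of_hasDerivAt one_pos hn
      (fun x _ => hgd x) (hgc'.intervalIntegrable 0 1)
    rw [hg10] at key
    have hne : (2 * (π:ℂ) * Complex.I * n) ≠ 0 := by
      simp [Complex.ext_iff, Real.pi_ne_zero, hn]
    have key2 : fourierCoeffOn one_pos g' n
        = (2 * (π:ℂ) * Complex.I * n) * fourierCoeffOn one_pos g n := by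
      field_simp at key
      linear_combination (norm := (push_cast; ring)) -key
    rw [key2]
    rw [norm_mul, mul_pow]
    have h3 : ‖2 * (π:ℂ) * Complex.I * n‖ ^ 2 = 4 * π ^ 2 * (n:ℝ) ^ 2 := by
      simp [norm_mul, Complex.norm_real, Real.norm_eq_abs, abs_of_pos Real.pi_pos,
        Complex.norm_intCast]
      rw [mul_pow, mul_pow, sq_abs]; ring
    rw [h3]
  have hPg2 : (∫ x in (0:ℝ)..1, ‖g x‖ ^ 2) = ∫ x in (0:ℝ)..1, f x ^ 2 := by
    refine integral_congr fun x _ => ?_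
    simp [hgdef, Complex.norm_real, Real.norm_eq_abs, sq_abs]
  have hPg2' : (∫ x in (0:ℝ)..1, ‖g' x‖ ^ 2) = ∫ x in (0:ℝ)..1, f' x ^ 2 := by
    refine integral_congr fun x _ => ?_
    simp [hg'def, Complex.norm_real, Real.norm_eq_abs, sq_abs]
  rw [← hPg2, ← hPg2', ← Pg, ← Pg', ← tsum_mul_left]
  refine Summable.tsum_le_tsum (fun n => ?_) (Sg.mul_left _) Sg'
  rcases eq_or_ne n 0 with rfl | hn
  · simp [hc0]
  · rw [hrel n hn]
    have h1 : (1:ℝ) ≤ (n:ℝ)^2 := by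
      have := Int.one_le_abs (by exact hn : n ≠ 0)
      calc (1:ℝ) = 1^2 := by norm_num
        _ ≤ (|n| : ℝ)^2 := by
          apply pow_le_pow_left₀ (by norm_num)
          exact_mod_cast this
        _ = (n:ℝ)^2 := by push_cast [sq_abs]; ring
    nlinarith [mul_le_mul_of_nonneg_right h1 (sq_nonneg ‖fourierCoeffOn one_pos g n‖),
      sq_nonneg π]

end aux

/-- Heat flow of a constant-speed parametrized closed curve of length `L`: the length
decays at least like `e^{−4π²αt}·L`. -/
theorem stmt_4 (d : ℕ) (hd : 1 ≤ d) (α L T : ℝ) (hα : 0 < α) (hL : 0 < L) (hT : 0 < T)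
    (Y : ℝ → ℝ → EuclideanSpace ℝ (Fin d))
    (hY : ContDiff ℝ (⊤ : ℕ∞) (Function.uncurry Y))
    (hper : ∀ t s : ℝ, Y t (s + 1) = Y t s)
    (hheat : ∀ t ∈ Set.Icc (0 : ℝ) T, ∀ s : ℝ,
      deriv (fun τ => Y τ s) t = α • deriv (deriv (Y t)) s)
    (hspeed : ∀ σ : ℝ, ‖deriv (Y 0) σ‖ = L) :
    ∀ t ∈ Set.Icc (0 : ℝ) T,
      (∫ σ in (0:ℝ)..1, ‖deriv (Y t) σ‖) ≤ Real.exp (-(4 * π ^ 2 * α * t)) * L := by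
  set U : ℝ × ℝ → EuclideanSpace ℝ (Fin d) := Function.uncurry Y with hU
  have hUs : ContDiff ℝ (⊤ : ℕ∞) U := hY
  set Z := fun p : ℝ × ℝ => fderiv ℝ U p (0, 1) with hZ
  have hZs : ContDiff ℝ (⊤ : ℕ∞) Z := smoothD hUs _
  set Z2 := fun p : ℝ × ℝ => fderiv ℝ Z p (0, 1) with hZ2
  have hZ2s : ContDiff ℝ (⊤ : ℕ∞) Z2 := smoothD hZs _
  set Z3 := fun p : ℝ × ℝ => fderiv ℝ Z2 p (0, 1) with hZ3
  have hZ3s : ContDiff ℝ (⊤ : ℕ∞) Z3 := smoothD hZ2s _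
  set W := fun p : ℝ × ℝ => fderiv ℝ U p (1, 0) with hW
  have hWs : ContDiff ℝ (⊤ : ℕ∞) W := smoothD hUs _
  set ZT := fun p : ℝ × ℝ => fderiv ℝ Z p (1, 0) with hZT
  have hZTs : ContDiff ℝ (⊤ : ℕ∞) ZT := smoothD hZs _
  -- slice derivatives
  have hYZ : ∀ t s, HasDerivAt (Y t) (Z (t, s)) s := fun t s => sliceS hUs t s
  have hderivY : ∀ t s, deriv (Y t) s = Z (t, s) := fun t s => (hYZ t s).deriv
  have hZZ2 : ∀ t s, HasDerivAt (fun s' => Z (t, s')) (Z2 (t, s)) s := fun t s => sliceS hZs t s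
  have hZ2Z3 : ∀ t s, HasDerivAt (fun s' => Z2 (t, s')) (Z3 (t, s)) s := fun t s => sliceS hZ2s t s
  have hderiv2Y : ∀ t s, deriv (deriv (Y t)) s = Z2 (t, s) := by
    intro t s
    have h : deriv (Y t) = fun s' => Z (t, s') := funext fun s' => hderivY t s'
    rw [h]; exact (hZZ2 t s).deriv
  have hYW : ∀ t s, HasDerivAt (fun τ => Y τ s) (W (t, s)) t := fun t s => sliceT hUs t s
  have hheat' : ∀ t ∈ Set.Icc (0:ℝ) T, ∀ s, W (t, s) = α • Z2 (t, s) := by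
    intro t ht s
    rw [← (hYW t s).deriv, hheat t ht s, hderiv2Y]
  have hZZT : ∀ t s, HasDerivAt (fun t' => Z (t', s)) (ZT (t, s)) t := fun t s => sliceT hZs t s
  have hZTZ3 : ∀ t ∈ Set.Icc (0:ℝ) T, ∀ s, ZT (t, s) = α • Z3 (t, s) := by
    intro t ht s
    have h1 : ZT (t, s) = fderiv ℝ W (t, s) (0, 1) := clairaut hUs (t, s) (0, 1) (1, 0)
    have h2 : HasDerivAt (fun s' => W (t, s')) (fderiv ℝ W (t, s) (0, 1)) s := sliceS hWs t s
    have h3 : (fun s' => W (t, s')) = fun s' => α • Z2 (t, s') := funext fun s' => hheat' t ht s'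
    rw [h3] at h2
    have h4 : HasDerivAt (fun s' => α • Z2 (t, s')) (α • Z3 (t, s)) s := (hZ2Z3 t s).const_smul α
    rw [h1, h2.unique h4]
  -- periodicity
  have hUper : ∀ p : ℝ × ℝ, U (p + (0, 1)) = U p := by
    intro p
    show Y (p.1 + 0) (p.2 + 1) = Y p.1 p.2
    rw [add_zero, hper]
  have hZper : ∀ p : ℝ × ℝ, Z (p + (0, 1)) = Z p := by
    intro p
    show fderiv ℝ U (p + (0,1)) (0,1) = fderiv ℝ U p (0,1)
    rw [fderiv_per (hUs.differentiable (by simp)) hUper p]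
  have hZ2per : ∀ p : ℝ × ℝ, Z2 (p + (0, 1)) = Z2 p := by
    intro p
    show fderiv ℝ Z (p + (0,1)) (0,1) = fderiv ℝ Z p (0,1)
    rw [fderiv_per (hZs.differentiable (by simp)) hZper p]
  have hZper' : ∀ t s : ℝ, Z (t, s + 1) = Z (t, s) := by
    intro t s
    have := hZper (t, s)
    simpa [Prod.ext_iff] using this
  have hZ2per' : ∀ t s : ℝ, Z2 (t, s + 1) = Z2 (t, s) := by
    intro t s
    have := hZ2per (t, s)
    simpa [Prod.ext_iff] using this
  -- continuity of slices
  have scont : ∀ (G : ℝ × ℝ → EuclideanSpace ℝ (Fin d)), ContDiff ℝ (⊤ : ℕ∞) G →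
      ∀ t : ℝ, Continuous fun σ => G (t, σ) := fun G hG t =>
    hG.continuous.comp (continuous_const.prodMk continuous_id)
  -- mean zero components
  have hmean : ∀ (t : ℝ) (j : Fin d), (∫ σ in (0:ℝ)..1, Z (t, σ) j) = 0 := by
    intro t j
    have hcomp : ∀ s, HasDerivAt (fun s' => Y t s' j) (Z (t, s) j) s := by
      intro s
      have h := (EuclideanSpace.proj (𝕜 := ℝ) j).hasFDerivAt.comp_hasDerivAt s (hYZ t s)
      exact h
    have hint : IntervalIntegrable (fun σ => Z (t, σ) j) volume 0 1 :=
      ((EuclideanSpace.proj j).continuous.comp (scont Z hZs t)).intervalIntegrable 0 1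
    rw [intervalIntegral.integral_eq_sub_of_hasDerivAt (fun s _ => hcomp s) hint]
    rw [show Y t 1 = Y t 0 from by simpa using hper t 0]
    simp
  -- energy
  set Eng : ℝ → ℝ := fun τ => ∫ σ in (0:ℝ)..1, ‖Z (τ, σ)‖ ^ 2 with hEng
  set φ : ℝ × ℝ → ℝ := fun p => ⟪Z p, ZT p⟫ + ⟪ZT p, Z p⟫ with hφ
  have hφc : Continuous φ :=
    (hZs.continuous.inner hZTs.continuous).add (hZTs.continuous.inner hZs.continuous)
  have hEngD : ∀ τ₀ : ℝ, HasDerivAt Eng (∫ σ in (0:ℝ)..1, φ (τ₀, σ)) τ₀ := by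
    intro τ₀
    obtain ⟨M, hM⟩ := (IsCompact.prod (isCompact_Icc (a := τ₀ - 1) (b := τ₀ + 1))
      (isCompact_Icc (a := (0:ℝ)) (b := 1))).exists_bound_of_continuousOn hφc.continuousOn
    have key := intervalIntegral.hasDerivAt_integral_of_dominated_loc_of_deriv_le
      (𝕜 := ℝ) (F := fun x σ => ‖Z (x, σ)‖ ^ 2) (F' := fun x σ => φ (x, σ)) (x₀ := τ₀)
      (a := 0) (b := 1) (μ := volume) (bound := fun _ => |M|) (s := Metric.ball τ₀ 1) (Metric.ball_mem_nhds τ₀ one_pos)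
      (Filter.Eventually.of_forall fun x =>
        (((scont Z hZs x).norm.pow 2).aestronglyMeasurable))
      (((scont Z hZs τ₀).norm.pow 2).intervalIntegrable 0 1)
      ((hφc.comp (continuous_const.prodMk continuous_id)).aestronglyMeasurable)
      ?_ intervalIntegrable_const ?_
    · exact key.2
    · refine MeasureTheory.ae_of_all _ fun σ hσ x hx => ?_
      have hmem : (x, σ) ∈ Icc (τ₀ - 1) (τ₀ + 1) ×ˢ Icc (0:ℝ) 1 := by
        constructor
        · have := Metric.mem_ball.1 hx
          rw [Real.dist_eq] at this
          constructor <;> [linarith [abs_lt.1 this |>.1]; linarith [abs_lt.1 this |>.2]]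
        · rw [Set.uIoc_of_le one_pos.le] at hσ
          exact Ioc_subset_Icc_self hσ
      exact le_trans (hM (x, σ) hmem) (le_abs_self M)
    · refine MeasureTheory.ae_of_all _ fun σ hσ x hx => ?_
      have h1 := (hZZT x σ).inner ℝ (hZZT x σ)
      have h2 : (fun y : ℝ => ⟪Z (y, σ), Z (y, σ)⟫) = fun y => ‖Z (y, σ)‖ ^ 2 :=
        funext fun y => real_inner_self_eq_norm_sq (Z (y, σ))
      rw [h2] at h1
      exact h1
  -- the derivative on [0, T]
  have hD : ∀ t ∈ Set.Icc (0:ℝ) T, (∫ σ in (0:ℝ)..1, φ (t, σ))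
      = -(2*α) * ∫ σ in (0:ℝ)..1, ‖Z2 (t, σ)‖ ^ 2 := by
    intro t ht
    have ibp : (∫ σ in (0:ℝ)..1, (⟪Z2 (t,σ), Z2 (t,σ)⟫ + ⟪Z3 (t,σ), Z (t,σ)⟫)) = 0 := by
      have hder : ∀ σ ∈ Set.uIcc (0:ℝ) 1, HasDerivAt (fun σ' => ⟪Z2 (t,σ'), Z (t,σ')⟫)
          (⟪Z2 (t,σ), Z2 (t,σ)⟫ + ⟪Z3 (t,σ), Z (t,σ)⟫) σ := fun σ _ =>
        (hZ2Z3 t σ).inner ℝ (hZZ2 t σ)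
      have hint : IntervalIntegrable
          (fun σ => ⟪Z2 (t,σ), Z2 (t,σ)⟫ + ⟪Z3 (t,σ), Z (t,σ)⟫) volume 0 1 :=
        (((scont Z2 hZ2s t).inner (scont Z2 hZ2s t)).add
          ((scont Z3 hZ3s t).inner (scont Z hZs t))).intervalIntegrable 0 1
      rw [intervalIntegral.integral_eq_sub_of_hasDerivAt hder hint]
      rw [show (1:ℝ) = 0 + 1 by norm_num, hZper' t 0, hZ2per' t 0]
      ring
    have hsplit : (∫ σ in (0:ℝ)..1, (⟪Z2 (t,σ), Z2 (t,σ)⟫ + ⟪Z3 (t,σ), Z (t,σ)⟫))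
        = (∫ σ in (0:ℝ)..1, ‖Z2 (t,σ)‖ ^ 2) + ∫ σ in (0:ℝ)..1, ⟪Z3 (t,σ), Z (t,σ)⟫ := by
      rw [intervalIntegral.integral_add
        (((scont Z2 hZ2s t).inner (scont Z2 hZ2s t)).intervalIntegrable 0 1)
        (((scont Z3 hZ3s t).inner (scont Z hZs t)).intervalIntegrable 0 1)]
      congr 1
      exact integral_congr fun σ _ => real_inner_self_eq_norm_sq _
    have hZ3int : (∫ σ in (0:ℝ)..1, ⟪Z3 (t,σ), Z (t,σ)⟫)
        = -∫ σ in (0:ℝ)..1, ‖Z2 (t,σ)‖ ^ 2 := by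
      rw [hsplit] at ibp; linarith
    have hφZ3 : ∀ σ : ℝ, φ (t, σ) = 2 * α * ⟪Z3 (t,σ), Z (t,σ)⟫ := by
      intro σ
      rw [hφ]
      simp only [hZTZ3 t ht σ, real_inner_smul_left, real_inner_smul_right]
      rw [real_inner_comm (Z (t,σ)) (Z3 (t,σ))]
      ring
    rw [integral_congr fun σ _ => hφZ3 σ, intervalIntegral.integral_const_mul, hZ3int]
    ring
  -- Wirtinger
  have hwirt : ∀ t : ℝ, 4 * π ^ 2 * (∫ σ in (0:ℝ)..1, ‖Z (t,σ)‖ ^ 2)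
      ≤ ∫ σ in (0:ℝ)..1, ‖Z2 (t,σ)‖ ^ 2 := by
    intro t
    have hnorm : ∀ v : EuclideanSpace ℝ (Fin d), ‖v‖ ^ 2 = ∑ j, (v j) ^ 2 := by
      intro v
      rw [EuclideanSpace.norm_eq, Real.sq_sqrt (Finset.sum_nonneg fun j _ => sq_nonneg _)]
      exact Finset.sum_congr rfl fun j _ => by rw [Real.norm_eq_abs, sq_abs]
    have cZ : ∀ j : Fin d, Continuous fun σ => Z (t, σ) j := fun j =>
      (EuclideanSpace.proj j).continuous.comp (scont Z hZs t)
    have cZ2 : ∀ j : Fin d, Continuous fun σ => Z2 (t, σ) j := fun j =>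
      (EuclideanSpace.proj j).continuous.comp (scont Z2 hZ2s t)
    rw [integral_congr (fun σ (_ : σ ∈ Set.uIcc (0:ℝ) 1) => hnorm (Z (t,σ))),
      integral_congr (fun σ (_ : σ ∈ Set.uIcc (0:ℝ) 1) => hnorm (Z2 (t,σ)))]
    rw [intervalIntegral.integral_finset_sum
      (fun j _ => (show Continuous fun σ => Z (t,σ) j ^ 2 from (cZ j).pow 2).intervalIntegrable 0 1),
      intervalIntegral.integral_finset_sum
      (fun j _ => (show Continuous fun σ => Z2 (t,σ) j ^ 2 from (cZ2 j).pow 2).intervalIntegrable 0 1), Finset.mul_sum]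
    refine Finset.sum_le_sum fun j _ => ?_
    refine wirtinger (fun σ => Z (t,σ) j) (fun σ => Z2 (t,σ) j) ?_
      (cZ2 j) (fun σ => show Z (t, σ+1) j = Z (t,σ) j by rw [hZper' t σ]) (hmean t j)
    intro σ
    have h := (EuclideanSpace.proj (𝕜 := ℝ) j).hasFDerivAt.comp_hasDerivAt σ (hZZ2 t σ)
    exact h
  -- Gronwall
  set c : ℝ := 8 * π ^ 2 * α with hc
  set ψ : ℝ → ℝ := fun τ => Eng τ * Real.exp (c * τ) with hψ
  have hψd : ∀ τ : ℝ, HasDerivAt ψ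
      ((∫ σ in (0:ℝ)..1, φ (τ, σ)) * Real.exp (c * τ) + Eng τ * (c * Real.exp (c * τ))) τ := by
    intro τ
    have hexp : HasDerivAt (fun τ' => Real.exp (c * τ')) (c * Real.exp (c * τ)) τ := by
      have := ((hasDerivAt_id τ).const_mul c).exp
      simpa [mul_comm] using this
    exact (hEngD τ).mul hexp
  have hanti : AntitoneOn ψ (Set.Icc 0 T) := by
    apply antitoneOn_of_deriv_nonpos (convex_Icc 0 T)
    · exact Continuous.continuousOn
        (continuous_iff_continuousAt.2 fun τ => (hψd τ).continuousAt)
    · intro x hx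
      exact ((hψd x).differentiableAt).differentiableWithinAt
    · intro x hx
      rw [interior_Icc] at hx
      have hx' : x ∈ Set.Icc (0:ℝ) T := Ioo_subset_Icc_self hx
      rw [(hψd x).deriv]
      have h1 := hD x hx'
      have h2 := hwirt x
      have h3 : (0:ℝ) < Real.exp (c * x) := Real.exp_pos _
      rw [h1, hc]
      nlinarith [mul_le_mul_of_nonneg_left (mul_le_mul_of_nonneg_right h2 h3.le) hα.le]
  have hEng0 : Eng 0 = L ^ 2 := by
    show (∫ σ in (0:ℝ)..1, ‖Z (0, σ)‖ ^ 2) = L ^ 2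
    rw [integral_congr (g := fun _ => L ^ 2) fun σ (_ : σ ∈ Set.uIcc (0:ℝ) 1) => by
      rw [← hderivY 0 σ, hspeed σ]]
    simp
  have hEngle : ∀ t ∈ Set.Icc (0:ℝ) T, Eng t * Real.exp (c * t) ≤ L ^ 2 := by
    intro t ht
    have h0 : (0:ℝ) ∈ Set.Icc (0:ℝ) T := ⟨le_refl 0, hT.le⟩
    have := hanti h0 ht ht.1
    rw [hψ] at this
    simpa [hEng0] using this
  -- conclusion
  intro t ht
  set len := ∫ σ in (0:ℝ)..1, ‖Z (t,σ)‖ with hlen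
  have hLHS : (∫ σ in (0:ℝ)..1, ‖deriv (Y t) σ‖) = len :=
    integral_congr fun σ _ => by rw [hderivY]
  have hcl : Continuous fun σ => ‖Z (t,σ)‖ := (scont Z hZs t).norm
  have hlen0 : (0:ℝ) ≤ len :=
    intervalIntegral.integral_nonneg one_pos.le fun σ _ => norm_nonneg _
  have hJ : len ^ 2 ≤ Eng t := by
    have expand : (0:ℝ) ≤ ∫ σ in (0:ℝ)..1, (‖Z (t,σ)‖ - len) ^ 2 :=
      intervalIntegral.integral_nonneg one_pos.le fun σ _ => sq_nonneg _
    have hexp : (∫ σ in (0:ℝ)..1, (‖Z (t,σ)‖ - len) ^ 2) = Eng t - len ^ 2 := by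
      have h1 : (fun σ => (‖Z (t,σ)‖ - len) ^ 2)
          = fun σ => ‖Z (t,σ)‖ ^ 2 - 2 * len * ‖Z (t,σ)‖ + len ^ 2 :=
        funext fun σ => by ring
      rw [h1]
      rw [intervalIntegral.integral_add ((show Continuous fun σ => ‖Z (t,σ)‖ ^ 2 - 2 * len * ‖Z (t,σ)‖ from (hcl.pow 2).sub
        (continuous_const.mul hcl)).intervalIntegrable 0 1)
        (continuous_const.intervalIntegrable 0 1)]
      rw [intervalIntegral.integral_sub ((show Continuous fun σ => ‖Z (t,σ)‖ ^ 2 from hcl.pow 2).intervalIntegrable 0 1)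
        ((show Continuous fun σ => 2 * len * ‖Z (t,σ)‖ from continuous_const.mul hcl).intervalIntegrable 0 1)]
      rw [intervalIntegral.integral_const_mul, intervalIntegral.integral_const]
      show _ - 2 * len * len + _ = (∫ σ in (0:ℝ)..1, ‖Z (t, σ)‖ ^ 2) - len ^ 2
      simp
      ring
    linarith
  have hEt : Eng t ≤ L ^ 2 * Real.exp (-(c * t)) := by
    have h1 := hEngle t ht
    have h2 : (0:ℝ) < Real.exp (c * t) := Real.exp_pos _
    rw [Real.exp_neg, ← div_eq_mul_inv, le_div_iff₀ h2]
    exact h1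
  have hfin : len ^ 2 ≤ (Real.exp (-(4 * π ^ 2 * α * t)) * L) ^ 2 := by
    have h1 : (Real.exp (-(4 * π ^ 2 * α * t)) * L) ^ 2
        = L ^ 2 * Real.exp (-(c * t)) := by
      rw [mul_pow, sq (Real.exp _), ← Real.exp_add,
        show -(4 * π ^ 2 * α * t) + -(4 * π ^ 2 * α * t) = -(c * t) by rw [hc]; ring]
      ring
    rw [h1]
    exact hJ.trans hEt
  rw [hLHS]
  have hR0 : (0:ℝ) ≤ Real.exp (-(4 * π ^ 2 * α * t)) * L :=
    mul_nonneg (Real.exp_pos _).le hL.le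
  calc len = Real.sqrt (len ^ 2) := (Real.sqrt_sq hlen0).symm
    _ ≤ Real.sqrt ((Real.exp (-(4 * π ^ 2 * α * t)) * L) ^ 2) := Real.sqrt_le_sqrt hfin
    _ = Real.exp (-(4 * π ^ 2 * α * t)) * L := Real.sqrt_sq hR0
end

section
/- Let d ≥ 2, α > 0, T > 0, and let Y : [0,T] × ℝ → ℝ^d be smooth, 1-periodic in the space variable, satisfying ∂ₜY = α·∂ₛₛY, and such that ∂ₛY(t,s) ≠ 0 for all (t,s). Let T(t,s) = ∂ₛY(t,s)/|∂ₛY(t,s)| be the unit tangent. Then the total curvature t ↦ ∫₀¹ |∂ₛT(t,σ)| dσ is nonincreasing on [0,T]: for all 0 ≤ τ ≤ t ≤ T, ∫₀¹ |∂ₛT(t,σ)| dσ ≤ ∫₀¹ |∂ₛT(τ,σ)| dσ. -/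
open Real Set Function
open scoped RealInnerProductSpace Topology ContDiff

noncomputable section HeatAux

variable {F : Type*} [NormedAddCommGroup F] [NormedSpace ℝ F]

/-- partial derivative in the second variable -/
def pd2 (f : ℝ × ℝ → F) : ℝ × ℝ → F := fun q => deriv (fun x => f (q.1, x)) q.2

/-- partial derivative in the first variable -/
def pd1 (f : ℝ × ℝ → F) : ℝ × ℝ → F := fun q => deriv (fun x => f (x, q.2)) q.1

lemma contDiffAt_pd2 {f : ℝ × ℝ → F} {p : ℝ × ℝ} (hf : ContDiffAt ℝ ∞ f p) :
    ContDiffAt ℝ ∞ (pd2 f) p := by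
  have h1 : ContDiffAt ℝ ∞ f (p.1, p.2) := by rw [Prod.mk.eta]; exact hf
  have hproj : ContDiffAt ℝ ∞ (fun q : (ℝ × ℝ) × ℝ => ((q.1.1 : ℝ), (q.2 : ℝ))) (p, p.2) :=
    (((contDiff_fst.fst).prodMk contDiff_snd).contDiffAt)
  have h0 : ContDiffAt ℝ ∞ (fun q : (ℝ × ℝ) × ℝ => f (q.1.1, q.2)) (p, p.2) :=
    ContDiffAt.comp (p, p.2) h1 hproj
  have h2 : ContDiffAt ℝ ∞ (fun q : ℝ × ℝ => fderiv ℝ (fun x => f (q.1, x)) q.2) p :=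
    ContDiffAt.fderiv (f := fun (q : ℝ × ℝ) (x : ℝ) => f (q.1, x)) (g := fun q => q.2)
      h0 contDiffAt_snd (by simp)
  exact (h2.clm_apply contDiffAt_const :
    ContDiffAt ℝ ∞ (fun q : ℝ × ℝ => fderiv ℝ (fun x => f (q.1, x)) q.2 1) p)

lemma contDiffAt_pd1 {f : ℝ × ℝ → F} {p : ℝ × ℝ} (hf : ContDiffAt ℝ ∞ f p) :
    ContDiffAt ℝ ∞ (pd1 f) p := by
  have h1 : ContDiffAt ℝ ∞ f (p.1, p.2) := by rw [Prod.mk.eta]; exact hf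
  have hproj : ContDiffAt ℝ ∞ (fun q : (ℝ × ℝ) × ℝ => ((q.2 : ℝ), (q.1.2 : ℝ))) (p, p.1) :=
    ((contDiff_snd.prodMk (contDiff_fst.snd)).contDiffAt)
  have h0 : ContDiffAt ℝ ∞ (fun q : (ℝ × ℝ) × ℝ => f (q.2, q.1.2)) (p, p.1) :=
    ContDiffAt.comp (p, p.1) h1 hproj
  have h2 : ContDiffAt ℝ ∞ (fun q : ℝ × ℝ => fderiv ℝ (fun x => f (x, q.2)) q.1) p :=
    ContDiffAt.fderiv (f := fun (q : ℝ × ℝ) (x : ℝ) => f (x, q.2)) (g := fun q => q.1)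
      h0 contDiffAt_fst (by simp)
  exact (h2.clm_apply contDiffAt_const :
    ContDiffAt ℝ ∞ (fun q : ℝ × ℝ => fderiv ℝ (fun x => f (x, q.2)) q.1 1) p)

lemma contDiff_pd2 {f : ℝ × ℝ → F} (hf : ContDiff ℝ ∞ f) : ContDiff ℝ ∞ (pd2 f) :=
  contDiff_iff_contDiffAt.2 fun _ => contDiffAt_pd2 hf.contDiffAt

lemma diffAt_slice2 {f : ℝ × ℝ → F} {p : ℝ × ℝ} (hf : ContDiffAt ℝ ∞ f p) :
    DifferentiableAt ℝ (fun x => f (p.1, x)) p.2 := by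
  have h1 : DifferentiableAt ℝ f (p.1, p.2) := by
    rw [Prod.mk.eta]; exact hf.differentiableAt (by simp)
  have hproj : DifferentiableAt ℝ (fun x : ℝ => ((p.1 : ℝ), (x : ℝ))) p.2 :=
    (differentiableAt_const _).prodMk differentiableAt_id
  exact DifferentiableAt.comp p.2 h1 hproj

lemma diffAt_slice1 {f : ℝ × ℝ → F} {p : ℝ × ℝ} (hf : ContDiffAt ℝ ∞ f p) :
    DifferentiableAt ℝ (fun x => f (x, p.2)) p.1 := by
  have h1 : DifferentiableAt ℝ f (p.1, p.2) := by
    rw [Prod.mk.eta]; exact hf.differentiableAt (by simp)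
  have hproj : DifferentiableAt ℝ (fun x : ℝ => ((x : ℝ), (p.2 : ℝ))) p.1 :=
    differentiableAt_id.prodMk (differentiableAt_const _)
  exact DifferentiableAt.comp p.1 h1 hproj

lemma hasDerivAt_pd2 {f : ℝ × ℝ → F} {p : ℝ × ℝ} (hf : ContDiffAt ℝ ∞ f p) :
    HasDerivAt (fun x => f (p.1, x)) (pd2 f p) p.2 :=
  (diffAt_slice2 hf).hasDerivAt

lemma hasDerivAt_pd1 {f : ℝ × ℝ → F} {p : ℝ × ℝ} (hf : ContDiffAt ℝ ∞ f p) :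
    HasDerivAt (fun x => f (x, p.2)) (pd1 f p) p.1 :=
  (diffAt_slice1 hf).hasDerivAt

/-- Schwarz/Clairaut symmetry of partial derivatives for a `C^∞` function at a point. -/
lemma clairaut_s7 {f : ℝ × ℝ → F} {p : ℝ × ℝ} (hf : ContDiffAt ℝ ∞ f p) :
    pd1 (pd2 f) p = pd2 (pd1 f) p := by
  have hf2 : ContDiffAt ℝ 2 f p := hf.of_le (WithTop.coe_le_coe.2 le_top)
  have hev : ∀ᶠ q in 𝓝 p, ContDiffAt ℝ 2 f q := hf2.eventually (by simp)
  have hder : ∀ᶠ q in 𝓝 p, HasFDerivAt f (fderiv ℝ f q) q :=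
    hev.mono fun q hq => (hq.differentiableAt (by simp)).hasFDerivAt
  have hf' : ContDiffAt ℝ 1 (fderiv ℝ f) p := hf2.fderiv_right le_rfl
  have hd' : HasFDerivAt (fderiv ℝ f) (fderiv ℝ (fderiv ℝ f) p) p :=
    (hf'.differentiableAt (by simp)).hasFDerivAt
  set f'' := fderiv ℝ (fderiv ℝ f) p with hf''
  have symm := second_derivative_symmetric_of_eventually hder hd'
  have hd2 : HasFDerivAt (fderiv ℝ f) f'' (p.1, p.2) := by rw [Prod.mk.eta]; exact hd'
  have hder2 : ∀ᶠ q in 𝓝 ((p.1 : ℝ), (p.2 : ℝ)), HasFDerivAt f (fderiv ℝ f q) q := by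
    rw [Prod.mk.eta]; exact hder
  -- LHS
  have hL : pd1 (pd2 f) p = f'' (1, 0) (0, 1) := by
    have hev1 : ∀ᶠ t : ℝ in 𝓝 p.1, pd2 f (t, p.2) = fderiv ℝ f (t, p.2) (0, 1) := by
      have hcont : Filter.Tendsto (fun t : ℝ => ((t : ℝ), (p.2 : ℝ)))
          (𝓝 p.1) (𝓝 (p.1, p.2)) :=
        ((continuous_id.prodMk continuous_const).tendsto p.1 : _)
      refine (hcont.eventually hder2).mono fun t ht => ?_
      have hcurve : HasDerivAt (fun x : ℝ => ((t : ℝ), (x : ℝ))) (0, 1) p.2 :=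
        HasDerivAt.prodMk (hasDerivAt_const p.2 t) (hasDerivAt_id p.2)
      exact (ht.comp_hasDerivAt p.2 hcurve).deriv
    have h1 : HasDerivAt (fun t : ℝ => fderiv ℝ f (t, p.2)) (f'' (1, 0)) p.1 := by
      have hcurve : HasDerivAt (fun x : ℝ => ((x : ℝ), (p.2 : ℝ))) (1, 0) p.1 :=
        HasDerivAt.prodMk (hasDerivAt_id p.1) (hasDerivAt_const p.1 p.2)
      exact hd2.comp_hasDerivAt p.1 hcurve
    have hD : HasDerivAt (fun t : ℝ => fderiv ℝ f (t, p.2) (0, 1)) (f'' (1, 0) (0, 1)) p.1 := by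
      have h2 := h1.clm_apply (hasDerivAt_const p.1 ((0 : ℝ), (1 : ℝ)))
      simpa using h2
    have heq : deriv (fun t : ℝ => pd2 f (t, p.2)) p.1
        = deriv (fun t : ℝ => fderiv ℝ f (t, p.2) (0, 1)) p.1 :=
      Filter.EventuallyEq.deriv_eq hev1
    show deriv (fun t : ℝ => pd2 f (t, p.2)) p.1 = _
    rw [heq]; exact hD.deriv
  -- RHS
  have hR : pd2 (pd1 f) p = f'' (0, 1) (1, 0) := by
    have hev1 : ∀ᶠ s : ℝ in 𝓝 p.2, pd1 f (p.1, s) = fderiv ℝ f (p.1, s) (1, 0) := by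
      have hcont : Filter.Tendsto (fun s : ℝ => ((p.1 : ℝ), (s : ℝ)))
          (𝓝 p.2) (𝓝 (p.1, p.2)) :=
        ((continuous_const.prodMk continuous_id).tendsto p.2 : _)
      refine (hcont.eventually hder2).mono fun s hs => ?_
      have hcurve : HasDerivAt (fun x : ℝ => ((x : ℝ), (s : ℝ))) (1, 0) p.1 :=
        HasDerivAt.prodMk (hasDerivAt_id p.1) (hasDerivAt_const p.1 s)
      exact (hs.comp_hasDerivAt p.1 hcurve).deriv
    have h1 : HasDerivAt (fun s : ℝ => fderiv ℝ f (p.1, s)) (f'' (0, 1)) p.2 := by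
      have hcurve : HasDerivAt (fun x : ℝ => ((p.1 : ℝ), (x : ℝ))) (0, 1) p.2 :=
        HasDerivAt.prodMk (hasDerivAt_const p.2 p.1) (hasDerivAt_id p.2)
      exact hd2.comp_hasDerivAt p.2 hcurve
    have hD : HasDerivAt (fun s : ℝ => fderiv ℝ f (p.1, s) (1, 0)) (f'' (0, 1) (1, 0)) p.2 := by
      have h2 := h1.clm_apply (hasDerivAt_const p.2 ((1 : ℝ), (0 : ℝ)))
      simpa using h2
    have heq : deriv (fun s : ℝ => pd1 f (p.1, s)) p.2
        = deriv (fun s : ℝ => fderiv ℝ f (p.1, s) (1, 0)) p.2 :=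
      Filter.EventuallyEq.deriv_eq hev1
    show deriv (fun s : ℝ => pd1 f (p.1, s)) p.2 = _
    rw [heq]; exact hD.deriv
  rw [hL, hR, symm]

/-- derivative of a 1-periodic function is 1-periodic -/
lemma periodic_deriv' {f : ℝ → F} (h : Function.Periodic f 1) :
    Function.Periodic (fun x => deriv f x) 1 := by
  intro x
  have hfe : (fun y => f (y + 1)) = f := funext h
  simp only []
  calc deriv f (x + 1) = deriv (fun y => f (y + 1)) x := (deriv_comp_add_const f 1 x).symm
    _ = deriv f x := by rw [hfe]


section Geom

variable {E : Type*} [NormedAddCommGroup E] [InnerProductSpace ℝ E]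

/-- space derivative of the curve -/
def pA (Y : ℝ → ℝ → E) : ℝ × ℝ → E := fun q => deriv (Y q.1) q.2

def pB (Y : ℝ → ℝ → E) : ℝ × ℝ → E := pd2 (pA Y)

def pC (Y : ℝ → ℝ → E) : ℝ × ℝ → E := pd2 (pB Y)

/-- unit tangent -/
def pTh (Y : ℝ → ℝ → E) : ℝ × ℝ → E := fun q => ‖pA Y q‖⁻¹ • pA Y q

def pu (Y : ℝ → ℝ → E) : ℝ × ℝ → E := pd2 (pTh Y)

def pus (Y : ℝ → ℝ → E) : ℝ × ℝ → E := pd2 (pu Y)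

def puss (Y : ℝ → ℝ → E) : ℝ × ℝ → E := pd2 (pus Y)

def pr (Y : ℝ → ℝ → E) : ℝ × ℝ → ℝ := fun q => ‖pA Y q‖

def prs (Y : ℝ → ℝ → E) : ℝ × ℝ → ℝ := pd2 (pr Y)

def prss (Y : ℝ → ℝ → E) : ℝ × ℝ → ℝ := pd2 (prs Y)

def pphi (α : ℝ) (Y : ℝ → ℝ → E) : ℝ × ℝ → ℝ := fun q => 2 * α * prs Y q / pr Y q

def pphis (α : ℝ) (Y : ℝ → ℝ → E) : ℝ × ℝ → ℝ := pd2 (pphi α Y)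

def pg (ε : ℝ) (Y : ℝ → ℝ → E) : ℝ × ℝ → ℝ :=
  fun q => Real.sqrt (⟪pu Y q, pu Y q⟫ + ε ^ 2)

def pgs (ε : ℝ) (Y : ℝ → ℝ → E) : ℝ × ℝ → ℝ := pd2 (pg ε Y)

def pgss (ε : ℝ) (Y : ℝ → ℝ → E) : ℝ × ℝ → ℝ := pd2 (pgs ε Y)

def pgt (ε : ℝ) (Y : ℝ → ℝ → E) : ℝ × ℝ → ℝ := pd1 (pg ε Y)

def pTht (Y : ℝ → ℝ → E) : ℝ × ℝ → E := pd1 (pTh Y)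

def put (Y : ℝ → ℝ → E) : ℝ × ℝ → E := pd1 (pu Y)

def pH (α ε : ℝ) (Y : ℝ → ℝ → E) : ℝ × ℝ → ℝ :=
  fun q => α * pgs ε Y q + pphi α Y q * pg ε Y q

def pHs (α ε : ℝ) (Y : ℝ → ℝ → E) : ℝ × ℝ → ℝ := pd2 (pH α ε Y)

variable {Y : ℝ → ℝ → E} {α ε : ℝ} {q : ℝ × ℝ}

lemma smooth_pA (hY : ContDiff ℝ ∞ (Function.uncurry Y)) : ContDiff ℝ ∞ (pA Y) :=
  (contDiff_pd2 hY : _)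

lemma smooth_pB (hY : ContDiff ℝ ∞ (Function.uncurry Y)) : ContDiff ℝ ∞ (pB Y) :=
  contDiff_pd2 (smooth_pA hY)

lemma smooth_pC (hY : ContDiff ℝ ∞ (Function.uncurry Y)) : ContDiff ℝ ∞ (pC Y) :=
  contDiff_pd2 (smooth_pB hY)

section CA
variable (hY : ContDiff ℝ ∞ (Function.uncurry Y)) (hq : pA Y q ≠ 0) (hε : ε ≠ 0)
include hY hq

omit hY in
lemma pr_pos : 0 < pr Y q := norm_pos_iff.2 hq

omit hY in
lemma pr_ne : pr Y q ≠ 0 := (pr_pos (Y := Y) hq).ne'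

lemma ca_pr : ContDiffAt ℝ ∞ (pr Y) q := ContDiffAt.norm ℝ (smooth_pA hY).contDiffAt hq

lemma ca_pTh : ContDiffAt ℝ ∞ (pTh Y) q :=
  ((ca_pr hY hq).inv (pr_ne hq)).smul (smooth_pA hY).contDiffAt

lemma ca_pu : ContDiffAt ℝ ∞ (pu Y) q := contDiffAt_pd2 (ca_pTh hY hq)

lemma ca_pus : ContDiffAt ℝ ∞ (pus Y) q := contDiffAt_pd2 (ca_pu hY hq)

lemma ca_puss : ContDiffAt ℝ ∞ (puss Y) q := contDiffAt_pd2 (ca_pus hY hq)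

lemma ca_prs : ContDiffAt ℝ ∞ (prs Y) q := contDiffAt_pd2 (ca_pr hY hq)

lemma ca_prss : ContDiffAt ℝ ∞ (prss Y) q := contDiffAt_pd2 (ca_prs hY hq)

lemma ca_pphi : ContDiffAt ℝ ∞ (pphi α Y) q :=
  (contDiffAt_const.mul (ca_prs hY hq)).div (ca_pr hY hq) (pr_ne hq)

lemma ca_pphis : ContDiffAt ℝ ∞ (pphis α Y) q := contDiffAt_pd2 (ca_pphi hY hq)

include hε in
lemma ca_pg : ContDiffAt ℝ ∞ (pg ε Y) q := by
  refine ContDiffAt.sqrt (f := fun q => ⟪pu Y q, pu Y q⟫ + ε ^ 2)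
    ((ContDiffAt.inner ℝ (ca_pu hY hq) (ca_pu hY hq)).add contDiffAt_const) ?_
  have h1 : (0:ℝ) < ε ^ 2 := by positivity
  have h2 : (0:ℝ) ≤ ⟪pu Y q, pu Y q⟫ := real_inner_self_nonneg
  positivity

include hε in
lemma ca_pgs : ContDiffAt ℝ ∞ (pgs ε Y) q := contDiffAt_pd2 (ca_pg hY hq hε)

include hε in
lemma ca_pgss : ContDiffAt ℝ ∞ (pgss ε Y) q := contDiffAt_pd2 (ca_pgs hY hq hε)

include hε in
lemma ca_pgt : ContDiffAt ℝ ∞ (pgt ε Y) q := contDiffAt_pd1 (ca_pg hY hq hε)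

lemma ca_pTht : ContDiffAt ℝ ∞ (pTht Y) q := contDiffAt_pd1 (ca_pTh hY hq)

lemma ca_put : ContDiffAt ℝ ∞ (put Y) q := contDiffAt_pd1 (ca_pu hY hq)

include hε in
lemma ca_pH : ContDiffAt ℝ ∞ (pH α ε Y) q :=
  (contDiffAt_const.mul (ca_pgs hY hq hε)).add ((ca_pphi hY hq).mul (ca_pg hY hq hε))

include hε in
lemma ca_pHs : ContDiffAt ℝ ∞ (pHs α ε Y) q := contDiffAt_pd2 (ca_pH hY hq hε)

end CA

lemma pA_eq (hq : pA Y q ≠ 0) : pA Y q = pr Y q • pTh Y q := by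
  simp only [pTh, pr, smul_smul]
  rw [mul_inv_cancel₀ (norm_ne_zero_iff.2 hq), one_smul]

lemma pTh_norm (hq : pA Y q ≠ 0) : ‖pTh Y q‖ = 1 := by
  rw [pTh, norm_smul, norm_inv, norm_norm]
  exact inv_mul_cancel₀ (pr_ne hq)

lemma inner_pTh_pTh (hq : pA Y q ≠ 0) : ⟪pTh Y q, pTh Y q⟫ = 1 := by
  rw [real_inner_self_eq_norm_sq, pTh_norm hq]; norm_num

lemma pg_pos (hε : 0 < ε) : 0 < pg ε Y q := by
  have h2 : (0:ℝ) ≤ ⟪pu Y q, pu Y q⟫ := real_inner_self_nonneg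
  rw [pg]; positivity

lemma pg_sq (hε : 0 < ε) : pg ε Y q ^ 2 = ⟪pu Y q, pu Y q⟫ + ε ^ 2 := by
  have h2 : (0:ℝ) ≤ ⟪pu Y q, pu Y q⟫ := real_inner_self_nonneg
  rw [pg, Real.sq_sqrt (by positivity)]

lemma pg_ge (hε : 0 < ε) : ε ≤ pg ε Y q := by
  have h2 : (0:ℝ) ≤ ⟪pu Y q, pu Y q⟫ := real_inner_self_nonneg
  have h := Real.sqrt_le_sqrt (show ε^2 ≤ ⟪pu Y q, pu Y q⟫ + ε^2 by linarith)
  rwa [Real.sqrt_sq hε.le] at h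

lemma pg_ge_norm (hε : 0 < ε) : ‖pu Y q‖ ≤ pg ε Y q := by
  have : ‖pu Y q‖ = Real.sqrt (⟪pu Y q, pu Y q⟫) := by
    rw [real_inner_self_eq_norm_sq, Real.sqrt_sq (norm_nonneg _)]
  rw [this, pg]
  have h1 : (0:ℝ) ≤ ε ^ 2 := sq_nonneg ε
  exact Real.sqrt_le_sqrt (by linarith)

lemma pg_le (hε : 0 < ε) : pg ε Y q ≤ ‖pu Y q‖ + ε := by
  rw [pg]
  have h2 : Real.sqrt ((‖pu Y q‖ + ε)^2) = ‖pu Y q‖ + ε := by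
    rw [Real.sqrt_sq (by positivity)]
  rw [← h2]
  apply Real.sqrt_le_sqrt
  rw [real_inner_self_eq_norm_sq]
  nlinarith [norm_nonneg (pu Y q), hε.le]


/-- The key Cauchy–Schwarz-type inequality. -/
lemma key_ineq {u v Th : E} (ε : ℝ) (hT : ‖Th‖ = 1)
    (h1 : ⟪u, Th⟫ = 0) (h2 : ⟪v, Th⟫ = -(‖u‖ ^ 2)) :
    ⟪u, v⟫ ^ 2 ≤ (‖u‖ ^ 2 + ε ^ 2) * (‖v‖ ^ 2 - ‖u‖ ^ 4) := by
  set w : E := v + (‖u‖ ^ 2) • Th with hw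
  have hvw : v = w - (‖u‖ ^ 2) • Th := by rw [hw]; abel
  have hTh2 : ⟪Th, Th⟫ = 1 := by rw [real_inner_self_eq_norm_sq, hT]; norm_num
  have hwT : ⟪w, Th⟫ = 0 := by
    rw [hw, inner_add_left, real_inner_smul_left, h2, hTh2]; ring
  have hv2 : ‖v‖ ^ 2 = ‖w‖ ^ 2 + ‖u‖ ^ 4 := by
    have hexp : ‖w - (‖u‖ ^ 2) • Th‖ ^ 2
        = ‖w‖ ^ 2 - 2 * ⟪w, (‖u‖ ^ 2) • Th⟫ + ‖(‖u‖ ^ 2) • Th‖ ^ 2 :=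
      norm_sub_sq_real w _
    have hsm : ‖(‖u‖ ^ 2) • Th‖ ^ 2 = ‖u‖ ^ 4 := by
      rw [norm_smul, hT, mul_one, Real.norm_eq_abs, sq_abs]; ring
    rw [hvw, hexp, hsm, real_inner_smul_right, hwT]; ring
  have huv : ⟪u, v⟫ = ⟪u, w⟫ := by
    rw [hvw, inner_sub_right, real_inner_smul_right, h1]; ring
  have cs : ⟪u, w⟫ ^ 2 ≤ ‖u‖ ^ 2 * ‖w‖ ^ 2 := by
    have h := abs_real_inner_le_norm u w
    have h' : |⟪u, w⟫| ^ 2 ≤ (‖u‖ * ‖w‖) ^ 2 := by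
      apply pow_le_pow_left₀ (abs_nonneg _) h
    rw [sq_abs] at h'
    nlinarith [h']
  have hw0 : (0:ℝ) ≤ ‖w‖ ^ 2 := sq_nonneg _
  rw [huv, hv2]
  nlinarith [sq_nonneg ε, cs, hw0]

section SliceIdentities

variable (hY : ContDiff ℝ ∞ (Function.uncurry Y)) {t : ℝ}
  (hsl : ∀ x : ℝ, pA Y (t, x) ≠ 0)
include hY hsl

lemma inner_pu_pTh (s : ℝ) : ⟪pu Y (t, s), pTh Y (t, s)⟫ = 0 := by
  have hTh' : HasDerivAt (fun x => pTh Y (t, x)) (pu Y (t, s)) s :=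
    hasDerivAt_pd2 (ca_pTh hY (hsl s))
  have h1 := HasDerivAt.inner ℝ hTh' hTh'
  have h2 : (fun x => ⟪pTh Y (t, x), pTh Y (t, x)⟫) = fun _ => (1:ℝ) :=
    funext fun x => inner_pTh_pTh (hsl x)
  rw [h2] at h1
  have h4 := (hasDerivAt_const s (1:ℝ)).unique h1
  have h5 := real_inner_comm (pTh Y (t, s)) (pu Y (t, s))
  linarith [h4, h5]

lemma inner_pus_pTh (s : ℝ) :
    ⟪pus Y (t, s), pTh Y (t, s)⟫ = -⟪pu Y (t, s), pu Y (t, s)⟫ := by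
  have hTh' : HasDerivAt (fun x => pTh Y (t, x)) (pu Y (t, s)) s :=
    hasDerivAt_pd2 (ca_pTh hY (hsl s))
  have hu' : HasDerivAt (fun x => pu Y (t, x)) (pus Y (t, s)) s :=
    hasDerivAt_pd2 (ca_pu hY (hsl s))
  have h1 := HasDerivAt.inner ℝ hu' hTh'
  have h2 : (fun x => ⟪pu Y (t, x), pTh Y (t, x)⟫) = fun _ => (0:ℝ) :=
    funext fun x => inner_pu_pTh hY hsl x
  rw [h2] at h1
  have h4 := (hasDerivAt_const s (0:ℝ)).unique h1
  linarith [h4]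

lemma pB_eq (s : ℝ) :
    pB Y (t, s) = pr Y (t, s) • pu Y (t, s) + prs Y (t, s) • pTh Y (t, s) := by
  have hTh' : HasDerivAt (fun x => pTh Y (t, x)) (pu Y (t, s)) s :=
    hasDerivAt_pd2 (ca_pTh hY (hsl s))
  have hA' : HasDerivAt (fun x => pA Y (t, x)) (pB Y (t, s)) s :=
    hasDerivAt_pd2 (p := (t, s)) (smooth_pA hY).contDiffAt
  have hr' : HasDerivAt (fun x => pr Y (t, x)) (prs Y (t, s)) s :=
    hasDerivAt_pd2 (ca_pr hY (hsl s))
  have hRHS := hr'.fun_smul hTh'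
  have hfe : (fun x => pr Y (t, x) • pTh Y (t, x)) = (fun x => pA Y (t, x)) :=
    funext fun x => (pA_eq (hsl x)).symm
  rw [hfe] at hRHS
  exact hA'.unique hRHS

lemma pC_eq (s : ℝ) :
    pC Y (t, s) = (pr Y (t, s) • pus Y (t, s) + prs Y (t, s) • pu Y (t, s))
      + (prs Y (t, s) • pu Y (t, s) + prss Y (t, s) • pTh Y (t, s)) := by
  have hTh' : HasDerivAt (fun x => pTh Y (t, x)) (pu Y (t, s)) s :=
    hasDerivAt_pd2 (ca_pTh hY (hsl s))
  have hu' : HasDerivAt (fun x => pu Y (t, x)) (pus Y (t, s)) s :=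
    hasDerivAt_pd2 (ca_pu hY (hsl s))
  have hB' : HasDerivAt (fun x => pB Y (t, x)) (pC Y (t, s)) s :=
    hasDerivAt_pd2 (p := (t, s)) (smooth_pB hY).contDiffAt
  have hr' : HasDerivAt (fun x => pr Y (t, x)) (prs Y (t, s)) s :=
    hasDerivAt_pd2 (ca_pr hY (hsl s))
  have hrs' : HasDerivAt (fun x => prs Y (t, x)) (prss Y (t, s)) s :=
    hasDerivAt_pd2 (ca_prs hY (hsl s))
  have hRHS := (hr'.fun_smul hu').fun_add (hrs'.fun_smul hTh')
  have hfe : (fun x => pr Y (t, x) • pu Y (t, x) + prs Y (t, x) • pTh Y (t, x))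
      = (fun x => pB Y (t, x)) := funext fun x => (pB_eq hY hsl x).symm
  rw [hfe] at hRHS
  exact hB'.unique hRHS

lemma pr_prs (s : ℝ) : pr Y (t, s) * prs Y (t, s) = ⟪pA Y (t, s), pB Y (t, s)⟫ := by
  have hA' : HasDerivAt (fun x => pA Y (t, x)) (pB Y (t, s)) s :=
    hasDerivAt_pd2 (p := (t, s)) (smooth_pA hY).contDiffAt
  have hr' : HasDerivAt (fun x => pr Y (t, x)) (prs Y (t, s)) s :=
    hasDerivAt_pd2 (ca_pr hY (hsl s))
  have h1 := HasDerivAt.inner ℝ hA' hA'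
  have h2 := hr'.fun_mul hr'
  have hfe : (fun x => pr Y (t, x) * pr Y (t, x)) = fun x => ⟪pA Y (t, x), pA Y (t, x)⟫ := by
    funext x
    rw [real_inner_self_eq_norm_sq]
    simp [pr, sq]
  rw [hfe] at h2
  have h3 := h2.unique h1
  have h4 := real_inner_comm (pA Y (t, s)) (pB Y (t, s))
  linarith [h3, h4]

end SliceIdentities

section SliceIdentities2

variable (hY : ContDiff ℝ ∞ (Function.uncurry Y)) {t : ℝ}
  (hsl : ∀ x : ℝ, pA Y (t, x) ≠ 0) (hε : 0 < ε)
include hY hsl hε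

lemma pg_pgs (s : ℝ) : pg ε Y (t, s) * pgs ε Y (t, s) = ⟪pu Y (t, s), pus Y (t, s)⟫ := by
  have hu' : HasDerivAt (fun x => pu Y (t, x)) (pus Y (t, s)) s :=
    hasDerivAt_pd2 (ca_pu hY (hsl s))
  have hg' : HasDerivAt (fun x => pg ε Y (t, x)) (pgs ε Y (t, s)) s :=
    hasDerivAt_pd2 (ca_pg hY (hsl s) hε.ne')
  have h1 := (HasDerivAt.inner ℝ hu' hu').add_const (ε ^ 2)
  have h2 := hg'.fun_mul hg'
  have hfe : (fun x => pg ε Y (t, x) * pg ε Y (t, x))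
      = fun x => ⟪pu Y (t, x), pu Y (t, x)⟫ + ε ^ 2 := by
    funext x
    rw [← pg_sq hε, sq]
  rw [hfe] at h2
  have h3 := h2.unique h1
  have h4 := real_inner_comm (pu Y (t, s)) (pus Y (t, s))
  linarith [h3, h4]

lemma pg_pgss (s : ℝ) :
    pgs ε Y (t, s) * pgs ε Y (t, s) + pg ε Y (t, s) * pgss ε Y (t, s)
      = ⟪pu Y (t, s), puss Y (t, s)⟫ + ⟪pus Y (t, s), pus Y (t, s)⟫ := by
  have hu' : HasDerivAt (fun x => pu Y (t, x)) (pus Y (t, s)) s :=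
    hasDerivAt_pd2 (ca_pu hY (hsl s))
  have hus' : HasDerivAt (fun x => pus Y (t, x)) (puss Y (t, s)) s :=
    hasDerivAt_pd2 (ca_pus hY (hsl s))
  have hg' : HasDerivAt (fun x => pg ε Y (t, x)) (pgs ε Y (t, s)) s :=
    hasDerivAt_pd2 (ca_pg hY (hsl s) hε.ne')
  have hgs' : HasDerivAt (fun x => pgs ε Y (t, x)) (pgss ε Y (t, s)) s :=
    hasDerivAt_pd2 (ca_pgs hY (hsl s) hε.ne')
  have h1 := HasDerivAt.inner ℝ hu' hus'
  have h2 := hg'.fun_mul hgs'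
  have hfe : (fun x => pg ε Y (t, x) * pgs ε Y (t, x))
      = fun x => ⟪pu Y (t, x), pus Y (t, x)⟫ :=
    funext fun x => pg_pgs hY hsl hε x
  rw [hfe] at h2
  have h3 := h2.unique h1
  have h4 := real_inner_comm (pus Y (t, s)) (pu Y (t, s))
  linarith [h3, h4]

lemma pHs_eq (s : ℝ) :
    pHs α ε Y (t, s) = α * pgss ε Y (t, s)
      + (pphis α Y (t, s) * pg ε Y (t, s) + pphi α Y (t, s) * pgs ε Y (t, s)) := by
  have hg' : HasDerivAt (fun x => pg ε Y (t, x)) (pgs ε Y (t, s)) s :=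
    hasDerivAt_pd2 (ca_pg hY (hsl s) hε.ne')
  have hgs' : HasDerivAt (fun x => pgs ε Y (t, x)) (pgss ε Y (t, s)) s :=
    hasDerivAt_pd2 (ca_pgs hY (hsl s) hε.ne')
  have hφ' : HasDerivAt (fun x => pphi α Y (t, x)) (pphis α Y (t, s)) s :=
    hasDerivAt_pd2 (ca_pphi hY (hsl s))
  have hH' : HasDerivAt (fun x => pH α ε Y (t, x)) (pHs α ε Y (t, s)) s :=
    hasDerivAt_pd2 (ca_pH hY (hsl s) hε.ne')
  have hRHS := (hgs'.const_mul α).add (hφ'.mul hg')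
  exact hH'.unique hRHS

end SliceIdentities2


section Heat

variable (hY : ContDiff ℝ ∞ (Function.uncurry Y)) {T : ℝ}
  (hheat : ∀ t ∈ Icc (0:ℝ) T, ∀ s : ℝ,
    deriv (fun τ => Y τ s) t = α • deriv (deriv (Y t)) s)
  {t : ℝ} (ht : t ∈ Icc (0:ℝ) T)
include hY hheat ht

lemma hasDerivAt_pA_t (s : ℝ) :
    HasDerivAt (fun x => pA Y (x, s)) (α • pC Y (t, s)) t := by
  have hd : HasDerivAt (fun x => pA Y (x, s)) (pd1 (pA Y) (t, s)) t :=
    hasDerivAt_pd1 (p := (t, s)) (smooth_pA hY).contDiffAt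
  have hpa : pA (E := E) Y = pd2 (Function.uncurry Y) := rfl
  have hcl : pd1 (pd2 (Function.uncurry Y)) (t, s) = pd2 (pd1 (Function.uncurry Y)) (t, s) :=
    clairaut_s7 hY.contDiffAt
  have hfe : (fun x => pd1 (Function.uncurry Y) (t, x)) = fun x => α • pB Y (t, x) := by
    funext x
    have h1 : pd1 (Function.uncurry Y) (t, x) = deriv (fun τ => Y τ x) t := rfl
    rw [h1, hheat t ht x]
    rfl
  have h2 : pd2 (pd1 (Function.uncurry Y)) (t, s) = α • pC Y (t, s) := by
    show deriv (fun x => pd1 (Function.uncurry Y) (t, x)) s = _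
    rw [hfe]
    have hdiff : DifferentiableAt ℝ (fun x => pB Y (t, x)) s :=
      (hasDerivAt_pd2 (p := (t, s)) (smooth_pB hY).contDiffAt).differentiableAt
    rw [deriv_fun_const_smul α hdiff]
    rfl
  have hfin : pd1 (pA Y) (t, s) = α • pC Y (t, s) := by rw [hpa, hcl, h2]
  rwa [hfin] at hd

variable (hsl : ∀ x : ℝ, pA Y (t, x) ≠ 0)
include hsl

omit hheat ht in
lemma inner_pA_pC (s : ℝ) :
    ⟪pA Y (t, s), pC Y (t, s)⟫
      = pr Y (t, s) * prss Y (t, s) - pr Y (t, s) ^ 2 * ⟪pu Y (t, s), pu Y (t, s)⟫ := by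
  have hThu : ⟪pTh Y (t, s), pu Y (t, s)⟫ = 0 := by
    rw [real_inner_comm]; exact inner_pu_pTh hY hsl s
  have hThus : ⟪pTh Y (t, s), pus Y (t, s)⟫ = -⟪pu Y (t, s), pu Y (t, s)⟫ := by
    rw [real_inner_comm]; exact inner_pus_pTh hY hsl s
  rw [pA_eq (hsl s), pC_eq hY hsl s]
  simp only [inner_add_right, real_inner_smul_left, real_inner_smul_right,
    inner_pTh_pTh (hsl s), hThu, hThus]
  ring

lemma hasDerivAt_pr_t (s : ℝ) :
    HasDerivAt (fun x => pr Y (x, s))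
      (α * (prss Y (t, s) - pr Y (t, s) * ⟪pu Y (t, s), pu Y (t, s)⟫)) t := by
  have hAt := hasDerivAt_pA_t (α := α) hY hheat ht s
  have hi := HasDerivAt.inner ℝ hAt hAt
  have hne : ⟪pA Y (t, s), pA Y (t, s)⟫ ≠ 0 := by
    rw [real_inner_self_eq_norm_sq]
    exact pow_ne_zero 2 (norm_ne_zero_iff.2 (hsl s))
  have hs := hi.sqrt hne
  have hfe : (fun x => Real.sqrt ⟪pA Y (x, s), pA Y (x, s)⟫) = fun x => pr Y (x, s) := by
    funext x
    rw [real_inner_self_eq_norm_sq, Real.sqrt_sq (norm_nonneg _)]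
    rfl
  rw [hfe] at hs
  have hval : (⟪pA Y (t, s), α • pC Y (t, s)⟫ + ⟪α • pC Y (t, s), pA Y (t, s)⟫)
        / (2 * Real.sqrt ⟪pA Y (t, s), pA Y (t, s)⟫)
      = α * (prss Y (t, s) - pr Y (t, s) * ⟪pu Y (t, s), pu Y (t, s)⟫) := by
    have h1 : Real.sqrt ⟪pA Y (t, s), pA Y (t, s)⟫ = pr Y (t, s) := by
      rw [real_inner_self_eq_norm_sq, Real.sqrt_sq (norm_nonneg _)]; rfl
    have h2 : ⟪pC Y (t, s), pA Y (t, s)⟫ = ⟪pA Y (t, s), pC Y (t, s)⟫ := real_inner_comm _ _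
    rw [real_inner_smul_right, real_inner_smul_left, h1, h2, inner_pA_pC hY hsl s]
    have ha : pr Y (t, s) ≠ 0 := pr_ne (hsl s)
    field_simp
    ring
  rwa [hval] at hs


lemma pTht_eq (s : ℝ) :
    pTht Y (t, s) = (pr Y (t, s))⁻¹ • (α • pC Y (t, s))
      + (-(α * (prss Y (t, s) - pr Y (t, s) * ⟪pu Y (t, s), pu Y (t, s)⟫))
          / pr Y (t, s) ^ 2) • pA Y (t, s) := by
  have hAt := hasDerivAt_pA_t (α := α) hY hheat ht s
  have hrt := hasDerivAt_pr_t hY hheat ht hsl s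
  have ha : pr Y (t, s) ≠ 0 := pr_ne (hsl s)
  have hinv := hrt.fun_inv ha
  have hsm := hinv.fun_smul hAt
  have hfe : (fun x => (pr Y (x, s))⁻¹ • pA Y (x, s)) = fun x => pTh Y (x, s) := rfl
  rw [hfe] at hsm
  have hd : HasDerivAt (fun x => pTh Y (x, s)) (pTht Y (t, s)) t :=
    hasDerivAt_pd1 (p := (t, s)) (ca_pTh hY (hsl s))
  exact hd.unique hsm

lemma pTht_eq' (s : ℝ) :
    pTht Y (t, s) = α • pus Y (t, s)
      + (α * ⟪pu Y (t, s), pu Y (t, s)⟫) • pTh Y (t, s)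
      + pphi α Y (t, s) • pu Y (t, s) := by
  rw [pTht_eq hY hheat ht hsl s, pC_eq hY hsl s, pA_eq (hsl s)]
  have ha : pr Y (t, s) ≠ 0 := pr_ne (hsl s)
  have hφ : pphi α Y (t, s) = 2 * α * prs Y (t, s) / pr Y (t, s) := rfl
  rw [hφ]
  match_scalars <;> (field_simp; try ring)

lemma put_eq (s : ℝ) :
    put Y (t, s) = α • puss Y (t, s)
      + ((α * (⟪pu Y (t, s), pus Y (t, s)⟫ + ⟪pus Y (t, s), pu Y (t, s)⟫)) • pTh Y (t, s)
          + (α * ⟪pu Y (t, s), pu Y (t, s)⟫) • pu Y (t, s))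
      + (pphi α Y (t, s) • pus Y (t, s) + pphis α Y (t, s) • pu Y (t, s)) := by
  have hcl : pd1 (pd2 (pTh Y)) (t, s) = pd2 (pd1 (pTh Y)) (t, s) :=
    clairaut_s7 (ca_pTh hY (hsl s))
  have h0 : put Y (t, s) = pd2 (pTht Y) (t, s) := hcl
  rw [h0]
  have hfe : (fun x => pTht Y (t, x)) = fun x => α • pus Y (t, x)
      + (α * ⟪pu Y (t, x), pu Y (t, x)⟫) • pTh Y (t, x)
      + pphi α Y (t, x) • pu Y (t, x) :=
    funext fun x => pTht_eq' hY hheat ht hsl x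
  have hTh' : HasDerivAt (fun x => pTh Y (t, x)) (pu Y (t, s)) s :=
    hasDerivAt_pd2 (ca_pTh hY (hsl s))
  have hu' : HasDerivAt (fun x => pu Y (t, x)) (pus Y (t, s)) s :=
    hasDerivAt_pd2 (ca_pu hY (hsl s))
  have hus' : HasDerivAt (fun x => pus Y (t, x)) (puss Y (t, s)) s :=
    hasDerivAt_pd2 (ca_pus hY (hsl s))
  have hφ' : HasDerivAt (fun x => pphi α Y (t, x)) (pphis α Y (t, s)) s :=
    hasDerivAt_pd2 (ca_pphi hY (hsl s))
  have h1 : HasDerivAt (fun x => α • pus Y (t, x)) (α • puss Y (t, s)) s :=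
    hus'.const_smul α
  have h2 := (((HasDerivAt.inner ℝ hu' hu').const_mul α).fun_smul hTh')
  have h3 := hφ'.fun_smul hu'
  have hD := (h1.fun_add h2).fun_add h3
  show deriv (fun x => pTht Y (t, x)) s = _
  rw [hfe]
  have := hD.deriv
  rw [this]
  abel

lemma pg_pgt (hε : 0 < ε) (s : ℝ) :
    pg ε Y (t, s) * pgt ε Y (t, s) = ⟪pu Y (t, s), put Y (t, s)⟫ := by
  have hut : HasDerivAt (fun x => pu Y (x, s)) (put Y (t, s)) t :=
    hasDerivAt_pd1 (p := (t, s)) (ca_pu hY (hsl s))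
  have hgt : HasDerivAt (fun x => pg ε Y (x, s)) (pgt ε Y (t, s)) t :=
    hasDerivAt_pd1 (p := (t, s)) (ca_pg hY (hsl s) hε.ne')
  have h1 := (HasDerivAt.inner ℝ hut hut).add_const (ε ^ 2)
  have h2 := hgt.fun_mul hgt
  have hfe2 : (fun x => pg ε Y (x, s) * pg ε Y (x, s))
      = fun x => ⟪pu Y (x, s), pu Y (x, s)⟫ + ε ^ 2 := by
    funext x
    rw [← pg_sq hε, sq]
  rw [hfe2] at h2
  have h3 := h2.unique h1
  have h4 := real_inner_comm (pu Y (t, s)) (put Y (t, s))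
  linarith [h3, h4]

lemma core_ineq (hα : 0 < α) (hε : 0 < ε) (s : ℝ) :
    pgt ε Y (t, s) ≤ pHs α ε Y (t, s) + ε * |pphis α Y (t, s)| := by
  set a := ⟪pu Y (t, s), pu Y (t, s)⟫ with hadef
  set b := ⟪pu Y (t, s), pus Y (t, s)⟫ with hbdef
  set c := ⟪pus Y (t, s), pus Y (t, s)⟫ with hcdef
  set d := ⟪pu Y (t, s), puss Y (t, s)⟫ with hddef
  set G := pg ε Y (t, s) with hGdef
  set Gs := pgs ε Y (t, s) with hGsdef
  set Gss := pgss ε Y (t, s) with hGssdef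
  set Gt := pgt ε Y (t, s) with hGtdef
  set P := pphi α Y (t, s) with hPdef
  set Ps := pphis α Y (t, s) with hPsdef
  have f1 : G * Gs = b := pg_pgs hY hsl hε s
  have f2 : Gs * Gs + G * Gss = d + c := pg_pgss hY hsl hε s
  have f3 : G ^ 2 = a + ε ^ 2 := pg_sq hε
  have f4 : ε ≤ G := pg_ge hε
  have f5 : (0:ℝ) < G := pg_pos hε
  have f6 : pHs α ε Y (t, s) = α * Gss + (Ps * G + P * Gs) := pHs_eq hY hsl hε s
  have f7 : G * Gt = ⟪pu Y (t, s), put Y (t, s)⟫ := pg_pgt hY hheat ht hsl hε s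
  have f8 : ⟪pu Y (t, s), put Y (t, s)⟫ = α * d + α * a * a + (P * b + Ps * a) := by
    rw [put_eq hY hheat ht hsl s]
    simp only [inner_add_right, real_inner_smul_right, inner_pu_pTh hY hsl s,
      ← hadef, ← hbdef, ← hddef]
    ring
  have f9 : b ^ 2 ≤ (a + ε ^ 2) * (c - a ^ 2) := by
    have hT : ‖pTh Y (t, s)‖ = 1 := pTh_norm (hsl s)
    have h1 : ⟪pu Y (t, s), pTh Y (t, s)⟫ = 0 := inner_pu_pTh hY hsl s
    have h2 : ⟪pus Y (t, s), pTh Y (t, s)⟫ = -(‖pu Y (t, s)‖ ^ 2) := by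
      rw [inner_pus_pTh hY hsl s, real_inner_self_eq_norm_sq]
    have hk := key_ineq (u := pu Y (t, s)) (v := pus Y (t, s)) ε hT h1 h2
    have ha' : ‖pu Y (t, s)‖ ^ 2 = a := (real_inner_self_eq_norm_sq _).symm
    have hc' : ‖pus Y (t, s)‖ ^ 2 = c := (real_inner_self_eq_norm_sq _).symm
    have ha4 : ‖pu Y (t, s)‖ ^ 4 = a ^ 2 := by
      rw [show (4:ℕ) = 2*2 from rfl, pow_mul, ha']
    rw [ha', hc', ha4] at hk
    exact hk
  have hGs2 : Gs ^ 2 ≤ c - a ^ 2 := by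
    have hb : b ^ 2 = G ^ 2 * Gs ^ 2 := by rw [← f1]; ring
    rw [hb, f3] at f9
    have hpos : (0:ℝ) < a + ε ^ 2 := by rw [← f3]; positivity
    exact le_of_mul_le_mul_left (by linarith [f9]) hpos
  have h10 : Gt * G = α * d + α * a * a + (P * b + Ps * a) := by
    rw [mul_comm, f7, f8]
  have h11 : (pHs α ε Y (t, s) + ε * |Ps|) * G
      = α * (d + c - Gs * Gs) + Ps * (a + ε ^ 2) + P * b + ε * |Ps| * G := by
    rw [f6, ← f3]
    have hthis : Gss * G = d + c - Gs * Gs := by linarith [f2]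
    linear_combination α * hthis + P * f1
  have hdiff : 0 ≤ (pHs α ε Y (t, s) + ε * |Ps|) * G - Gt * G := by
    rw [h10, h11]
    have habs1 : -|Ps| ≤ Ps := neg_abs_le Ps
    have habs2 : (0:ℝ) ≤ |Ps| := abs_nonneg Ps
    have hprod : ε * |Ps| * ε ≤ ε * |Ps| * G :=
      mul_le_mul_of_nonneg_left f4 (by positivity)
    nlinarith [hGs2, hα.le, hε.le, habs1, habs2, hprod, sq_nonneg Gs]
  have := sub_nonneg.1 hdiff
  exact le_of_mul_le_mul_right this f5

end Heat

section Per

lemma per_pd2' {F : Type*} [NormedAddCommGroup F] [NormedSpace ℝ F]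
    {f : ℝ × ℝ → F} (hf : ∀ t s : ℝ, f (t, s + 1) = f (t, s)) (t s : ℝ) :
    pd2 f (t, s + 1) = pd2 f (t, s) := by
  have hp : Function.Periodic (fun x => f (t, x)) 1 := fun x => hf t x
  exact periodic_deriv' hp s

variable (hper : ∀ t s : ℝ, Y t (s + 1) = Y t s)
include hper

lemma per_pA : ∀ t s : ℝ, pA Y (t, s + 1) = pA Y (t, s) := by
  intro t s
  have hp : Function.Periodic (Y t) 1 := fun x => hper t x
  exact periodic_deriv' hp s

lemma per_pB : ∀ t s : ℝ, pB Y (t, s + 1) = pB Y (t, s) :=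
  per_pd2' (per_pA hper)

lemma per_pr : ∀ t s : ℝ, pr Y (t, s + 1) = pr Y (t, s) := by
  intro t s; simp only [pr, per_pA hper t s]

lemma per_prs : ∀ t s : ℝ, prs Y (t, s + 1) = prs Y (t, s) :=
  per_pd2' (per_pr hper)

lemma per_pTh : ∀ t s : ℝ, pTh Y (t, s + 1) = pTh Y (t, s) := by
  intro t s; simp only [pTh, pr, per_pA hper t s]

lemma per_pu : ∀ t s : ℝ, pu Y (t, s + 1) = pu Y (t, s) :=
  per_pd2' (per_pTh hper)

lemma per_pphi : ∀ t s : ℝ, pphi α Y (t, s + 1) = pphi α Y (t, s) := by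
  intro t s; simp only [pphi, per_prs hper t s, per_pr hper t s]

lemma per_pg : ∀ t s : ℝ, pg ε Y (t, s + 1) = pg ε Y (t, s) := by
  intro t s; simp only [pg, per_pu hper t s]

lemma per_pgs : ∀ t s : ℝ, pgs ε Y (t, s + 1) = pgs ε Y (t, s) :=
  per_pd2' (per_pg hper)

lemma per_pH : ∀ t s : ℝ, pH α ε Y (t, s + 1) = pH α ε Y (t, s) := by
  intro t s
  simp only [pH, per_pgs hper t s, per_pphi hper t s, per_pg hper t s]

lemma per_pA_int (t s : ℝ) (n : ℤ) : pA Y (t, s - n) = pA Y (t, s) := by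
  have hp : Function.Periodic (fun x => pA Y (t, x)) 1 := fun x => per_pA hper t x
  have := hp.sub_zsmul_eq (x := s) n
  simpa using this

end Per

section Delta

variable (hY : ContDiff ℝ ∞ (Function.uncurry Y)) {T : ℝ} (hT : 0 < T)
  (himm' : ∀ t ∈ Icc (0:ℝ) T, ∀ s : ℝ, pA Y (t, s) ≠ 0)
  (hper : ∀ t s : ℝ, Y t (s + 1) = Y t s)
include hY hT himm' hper

lemma exists_delta :
    ∃ δ > 0, ∀ p : ℝ × ℝ, p.1 ∈ Ioo (-δ) (T + δ) → pA Y p ≠ 0 := by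
  set U := (pA Y) ⁻¹' ({0}ᶜ) with hU
  have hUopen : IsOpen U := (isOpen_compl_singleton).preimage (smooth_pA hY).continuous
  have hK : IsCompact ((Icc (0:ℝ) T) ×ˢ (Icc (0:ℝ) 1)) := isCompact_Icc.prod isCompact_Icc
  have hKU : (Icc (0:ℝ) T) ×ˢ (Icc (0:ℝ) 1) ⊆ U := by
    rintro ⟨a, b⟩ hab
    exact himm' a hab.1 b
  obtain ⟨δ, hδ, hsub⟩ := hK.exists_thickening_subset_open hUopen hKU
  refine ⟨δ, hδ, ?_⟩
  rintro ⟨x, y⟩ hx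
  simp only [mem_Ioo] at hx
  have hfr : pA Y (x, y) = pA Y (x, Int.fract y) := by
    have h1 : Int.fract y = y - (⌊y⌋ : ℤ) := rfl
    rw [h1, per_pA_int hper x y ⌊y⌋]
  set x' := max 0 (min x T) with hx'
  have hx'mem : x' ∈ Icc (0:ℝ) T := by
    constructor
    · exact le_max_left _ _
    · apply max_le (le_of_lt hT) (min_le_right _ _)
  have habs : |x - x'| < δ := by
    rw [hx']
    rcases le_total x 0 with h0 | h0
    · rw [min_eq_left (le_trans h0 hT.le), max_eq_left h0, sub_zero]
      exact abs_lt.2 ⟨hx.1, lt_of_le_of_lt h0 hδ⟩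
    · rcases le_total x T with h1 | h1
      · rw [min_eq_left h1, max_eq_right h0, sub_self, abs_zero]
        exact hδ
      · rw [min_eq_right h1, max_eq_right hT.le]
        exact abs_lt.2 ⟨by linarith [hx.2], by linarith [hx.2]⟩
  have hmem : ((x : ℝ), Int.fract y) ∈ Metric.thickening δ ((Icc (0:ℝ) T) ×ˢ (Icc (0:ℝ) 1)) := by
    rw [Metric.mem_thickening_iff]
    refine ⟨(x', Int.fract y), ⟨hx'mem, ⟨Int.fract_nonneg y, (Int.fract_lt_one y).le⟩⟩, ?_⟩
    rw [Prod.dist_eq]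
    simp only [dist_self]
    rw [Real.dist_eq]
    exact max_lt habs hδ
  have hthis := hsub hmem
  rw [hfr]
  simpa [hU] using hthis

end Delta


section Main

variable {T : ℝ}

theorem heat_total_curvature_mono (α T : ℝ) (hα : 0 < α) (hT : 0 < T)
    (Y : ℝ → ℝ → E)
    (hY : ContDiff ℝ ∞ (Function.uncurry Y))
    (hper : ∀ t s : ℝ, Y t (s + 1) = Y t s)
    (hheat : ∀ t ∈ Icc (0:ℝ) T, ∀ s : ℝ,
      deriv (fun τ => Y τ s) t = α • deriv (deriv (Y t)) s)
    (himm : ∀ t ∈ Icc (0:ℝ) T, ∀ s : ℝ, deriv (Y t) s ≠ 0) :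
    ∀ τ ∈ Icc (0:ℝ) T, ∀ t ∈ Icc (0:ℝ) T, τ ≤ t →
      (∫ σ in (0:ℝ)..1, ‖pu Y (t, σ)‖) ≤ ∫ σ in (0:ℝ)..1, ‖pu Y (τ, σ)‖ := by
  intro τ hτ t ht hτt
  have himm' : ∀ x ∈ Icc (0:ℝ) T, ∀ s : ℝ, pA Y (x, s) ≠ 0 := himm
  obtain ⟨δ, hδ, hne⟩ := exists_delta hY hT himm' hper
  have hIcc_sub : ∀ x ∈ Icc (0:ℝ) T, x ∈ Ioo (-δ) (T + δ) := fun x hx =>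
    ⟨by linarith [hx.1], by linarith [hx.2]⟩
  refine le_of_forall_pos_le_add ?_
  intro η hη
  -- bound on |pphis| over the compact set
  have hcont_phis : ContinuousOn (pphis α Y) ((Icc (0:ℝ) T) ×ˢ (Icc (0:ℝ) 1)) := by
    intro p hp
    exact ((ca_pphis hY (hne p (hIcc_sub p.1 hp.1))).continuousAt).continuousWithinAt
  obtain ⟨M₀, hM₀⟩ := (isCompact_Icc.prod isCompact_Icc).exists_bound_of_continuousOn hcont_phis
  set M := max M₀ 0 with hMdef
  have hM : ∀ p ∈ (Icc (0:ℝ) T) ×ˢ (Icc (0:ℝ) 1), |pphis α Y p| ≤ M := fun p hp =>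
    le_trans (by simpa [Real.norm_eq_abs] using hM₀ p hp) (le_max_left _ _)
  have hMnn : (0:ℝ) ≤ M := le_max_right _ _
  have hden : (0:ℝ) < 1 + M * T := by nlinarith
  set ε := η / (1 + M * T) with hεdef
  have hεpos : 0 < ε := div_pos hη hden
  -- continuity of slices
  have hcont_pg : ∀ x ∈ Ioo (-δ) (T + δ), Continuous (fun σ => pg ε Y (x, σ)) := by
    intro x hx
    refine continuous_iff_continuousAt.2 fun σ => ?_
    exact ((ca_pg hY (hne (x, σ) hx) hεpos.ne').continuousAt).comp
      ((continuous_const.prodMk continuous_id).continuousAt)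
  have hcont_pgt : ∀ x ∈ Ioo (-δ) (T + δ), Continuous (fun σ => pgt ε Y (x, σ)) := by
    intro x hx
    refine continuous_iff_continuousAt.2 fun σ => ?_
    exact ((ca_pgt hY (hne (x, σ) hx) hεpos.ne').continuousAt).comp
      ((continuous_const.prodMk continuous_id).continuousAt)
  have hcont_pHs : ∀ x ∈ Ioo (-δ) (T + δ), Continuous (fun σ => pHs α ε Y (x, σ)) := by
    intro x hx
    refine continuous_iff_continuousAt.2 fun σ => ?_
    exact ((ca_pHs hY (hne (x, σ) hx) hεpos.ne').continuousAt).comp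
      ((continuous_const.prodMk continuous_id).continuousAt)
  have hcont_phis' : ∀ x ∈ Ioo (-δ) (T + δ), Continuous (fun σ => pphis α Y (x, σ)) := by
    intro x hx
    refine continuous_iff_continuousAt.2 fun σ => ?_
    exact ((ca_pphis hY (hne (x, σ) hx)).continuousAt).comp
      ((continuous_const.prodMk continuous_id).continuousAt)
  have hcont_pu : ∀ x ∈ Ioo (-δ) (T + δ), Continuous (fun σ => ‖pu Y (x, σ)‖) := by
    intro x hx
    refine continuous_iff_continuousAt.2 fun σ => ?_
    exact (((ca_pu hY (hne (x, σ) hx)).continuousAt).comp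
      ((continuous_const.prodMk continuous_id).continuousAt)).norm
  set S : ℝ → ℝ := fun x => ∫ σ in (0:ℝ)..1, pg ε Y (x, σ) with hSdef
  -- Step A : derivative of S
  have stepA : ∀ x ∈ Icc (0:ℝ) T,
      IntervalIntegrable (fun σ => pgt ε Y (x, σ)) MeasureTheory.volume 0 1 ∧
      HasDerivAt S (∫ σ in (0:ℝ)..1, pgt ε Y (x, σ)) x := by
    intro x hx
    obtain ⟨ρ, hρ, hball⟩ := Metric.isOpen_iff.1 isOpen_Ioo x (hIcc_sub x hx)
    have hρ2 : 0 < ρ / 2 := by linarith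
    have hcb : Metric.closedBall x (ρ/2) ⊆ Ioo (-δ) (T + δ) := by
      intro y hy
      apply hball
      rw [Metric.mem_ball]
      rw [Metric.mem_closedBall] at hy
      linarith
    have hcpt : IsCompact ((Metric.closedBall x (ρ/2)) ×ˢ (Icc (0:ℝ) 1)) :=
      (isCompact_closedBall x (ρ/2)).prod isCompact_Icc
    have hcont2 : ContinuousOn (pgt ε Y) ((Metric.closedBall x (ρ/2)) ×ˢ (Icc (0:ℝ) 1)) := by
      intro p hp
      exact ((ca_pgt hY (hne p (hcb hp.1)) hεpos.ne').continuousAt).continuousWithinAt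
    obtain ⟨Mx, hMx⟩ := hcpt.exists_bound_of_continuousOn hcont2
    have key := intervalIntegral.hasDerivAt_integral_of_dominated_loc_of_deriv_le
      (F := fun x' σ => pg ε Y (x', σ)) (F' := fun x' σ => pgt ε Y (x', σ))
      (x₀ := x) (a := 0) (b := 1) (bound := fun _ => Mx) (μ := MeasureTheory.volume) (Metric.ball_mem_nhds x hρ2)
      ?_ ?_ ?_ ?_ ?_ ?_
    · exact key
    · filter_upwards [Metric.ball_mem_nhds x hρ2] with x' hx'
      exact ((hcont_pg x' (hcb (Metric.ball_subset_closedBall hx'))).aestronglyMeasurable)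
    · exact (hcont_pg x (hIcc_sub x hx)).intervalIntegrable 0 1
    · exact (hcont_pgt x (hIcc_sub x hx)).aestronglyMeasurable
    · filter_upwards [] with σ
      intro hσ x' hx'
      have hx'2 : x' ∈ Metric.closedBall x (ρ/2) := Metric.ball_subset_closedBall hx'
      have hσ2 : σ ∈ Icc (0:ℝ) 1 := by
        rcases hσ with ⟨h1, h2⟩
        constructor
        · exact le_of_lt (by simpa using h1)
        · simpa using h2
      exact hMx (x', σ) ⟨hx'2, hσ2⟩
    · exact intervalIntegrable_const
    · filter_upwards [] with σ
      intro hσ x' hx'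
      have hx'2 : x' ∈ Ioo (-δ) (T + δ) := hcb (Metric.ball_subset_closedBall hx')
      exact hasDerivAt_pd1 (p := (x', σ)) (ca_pg hY (hne (x', σ) hx'2) hεpos.ne')
  -- Step B : the derivative is at most ε * M
  have stepB : ∀ x ∈ Icc (0:ℝ) T, (∫ σ in (0:ℝ)..1, pgt ε Y (x, σ)) ≤ ε * M := by
    intro x hx
    have hx' : x ∈ Ioo (-δ) (T + δ) := hIcc_sub x hx
    have hsl : ∀ z : ℝ, pA Y (x, z) ≠ 0 := fun z => himm x hx z
    have hptw : ∀ σ ∈ Icc (0:ℝ) 1,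
        pgt ε Y (x, σ) ≤ pHs α ε Y (x, σ) + ε * |pphis α Y (x, σ)| := fun σ _ =>
      core_ineq hY hheat hx hsl hα hεpos σ
    have hint1 : IntervalIntegrable (fun σ => pgt ε Y (x, σ)) MeasureTheory.volume 0 1 :=
      (stepA x hx).1
    have hint2 : IntervalIntegrable
        (fun σ => pHs α ε Y (x, σ) + ε * |pphis α Y (x, σ)|) MeasureTheory.volume 0 1 := by
      apply ContinuousOn.intervalIntegrable
      apply Continuous.continuousOn
      exact (hcont_pHs x hx').add ((continuous_const.mul ((hcont_phis' x hx').abs)))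
    have hm := intervalIntegral.integral_mono_on zero_le_one hint1 hint2 hptw
    have hsplit : (∫ σ in (0:ℝ)..1, (pHs α ε Y (x, σ) + ε * |pphis α Y (x, σ)|))
        = (∫ σ in (0:ℝ)..1, pHs α ε Y (x, σ))
          + ∫ σ in (0:ℝ)..1, ε * |pphis α Y (x, σ)| := by
      apply intervalIntegral.integral_add
      · exact ((hcont_pHs x hx').intervalIntegrable 0 1)
      · exact ((continuous_const.mul ((hcont_phis' x hx').abs)).intervalIntegrable 0 1)
    have hH0 : (∫ σ in (0:ℝ)..1, pHs α ε Y (x, σ)) = 0 := by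
      have hder : ∀ σ ∈ uIcc (0:ℝ) 1,
          HasDerivAt (fun z => pH α ε Y (x, z)) (pHs α ε Y (x, σ)) σ := fun σ _ =>
        hasDerivAt_pd2 (p := (x, σ)) (ca_pH hY (hne (x, σ) hx') hεpos.ne')
      have hintH : IntervalIntegrable (fun σ => pHs α ε Y (x, σ)) MeasureTheory.volume 0 1 :=
        (hcont_pHs x hx').intervalIntegrable 0 1
      rw [intervalIntegral.integral_eq_sub_of_hasDerivAt hder hintH]
      have hone : (1:ℝ) = 0 + 1 := by norm_num
      rw [hone, per_pH hper x 0, sub_self]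
    have habs : (∫ σ in (0:ℝ)..1, ε * |pphis α Y (x, σ)|) ≤ ε * M := by
      have hb : ∀ σ ∈ Icc (0:ℝ) 1, ε * |pphis α Y (x, σ)| ≤ ε * M := fun σ hσ =>
        mul_le_mul_of_nonneg_left (hM (x, σ) ⟨hx, hσ⟩) hεpos.le
      have := intervalIntegral.integral_mono_on (μ := MeasureTheory.volume) zero_le_one
        ((continuous_const.mul ((hcont_phis' x hx').abs)).intervalIntegrable 0 1)
        intervalIntegrable_const hb
      simpa using this
    linarith [hm, hsplit, hH0, habs]
  -- Step C : almost-monotonicity of S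
  have stepC : S t ≤ S τ + T * (ε * M) := by
    have hGd : ∀ x ∈ Icc (0:ℝ) T,
        HasDerivAt (fun y => S y - y * (ε * M))
          ((∫ σ in (0:ℝ)..1, pgt ε Y (x, σ)) - ε * M) x := by
      intro x hx
      exact ((stepA x hx).2).sub (by simpa using (hasDerivAt_mul_const (x := x) (ε * M)))
    have hanti : AntitoneOn (fun y => S y - y * (ε * M)) (Icc (0:ℝ) T) := by
      apply antitoneOn_of_deriv_nonpos (convex_Icc 0 T)
      · intro y hy
        exact ((hGd y hy).continuousAt).continuousWithinAt
      · intro y hy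
        rw [interior_Icc] at hy
        exact ((hGd y (Ioo_subset_Icc_self hy)).differentiableAt).differentiableWithinAt
      · intro y hy
        rw [interior_Icc] at hy
        have hy' : y ∈ Icc (0:ℝ) T := Ioo_subset_Icc_self hy
        rw [(hGd y hy').deriv]
        have := stepB y hy'
        linarith
    have h1 : S t - t * (ε * M) ≤ S τ - τ * (ε * M) := hanti hτ ht hτt
    have h2 : 0 ≤ ε * M := mul_nonneg hεpos.le hMnn
    have h3 : t - τ ≤ T := by
      rcases ht with ⟨_, ht2⟩
      rcases hτ with ⟨hτ1, _⟩
      linarith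
    nlinarith [h1, h2, h3]
  -- Step D : comparison of K and S
  have hKt : (∫ σ in (0:ℝ)..1, ‖pu Y (t, σ)‖) ≤ S t := by
    apply intervalIntegral.integral_mono_on zero_le_one
      ((hcont_pu t (hIcc_sub t ht)).intervalIntegrable 0 1)
      ((hcont_pg t (hIcc_sub t ht)).intervalIntegrable 0 1)
    intro σ _
    exact pg_ge_norm hεpos
  have hKτ : S τ ≤ (∫ σ in (0:ℝ)..1, ‖pu Y (τ, σ)‖) + ε := by
    have h1 : S τ ≤ ∫ σ in (0:ℝ)..1, (‖pu Y (τ, σ)‖ + ε) := by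
      apply intervalIntegral.integral_mono_on zero_le_one
        ((hcont_pg τ (hIcc_sub τ hτ)).intervalIntegrable 0 1)
        (((hcont_pu τ (hIcc_sub τ hτ)).add continuous_const).intervalIntegrable 0 1)
      intro σ _
      exact pg_le hεpos
    have h2 : (∫ σ in (0:ℝ)..1, (‖pu Y (τ, σ)‖ + ε))
        = (∫ σ in (0:ℝ)..1, ‖pu Y (τ, σ)‖) + ε := by
      rw [intervalIntegral.integral_add
        ((hcont_pu τ (hIcc_sub τ hτ)).intervalIntegrable 0 1)
        intervalIntegrable_const]
      simp
    linarith [h1, h2]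
  have hfin : ε + T * (ε * M) = η := by
    rw [hεdef]
    field_simp
  linarith [hKt, hKτ, stepC, hfin]

end Main

end Geom

end HeatAux

open Real

/-- Under the heat flow of an immersed closed curve, the total (absolute) curvature
`∫₀¹ |∂ₛT| dσ` of the unit tangent `T = ∂ₛY/|∂ₛY|` is nonincreasing in time. -/
theorem stmt_7 (d : ℕ) (hd : 2 ≤ d) (α T : ℝ) (hα : 0 < α) (hT : 0 < T)
    (Y : ℝ → ℝ → EuclideanSpace ℝ (Fin d))
    (hY : ContDiff ℝ (⊤ : ℕ∞) (Function.uncurry Y))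
    (hper : ∀ t s : ℝ, Y t (s + 1) = Y t s)
    (hheat : ∀ t ∈ Set.Icc (0 : ℝ) T, ∀ s : ℝ,
      deriv (fun τ => Y τ s) t = α • deriv (deriv (Y t)) s)
    (himm : ∀ t ∈ Set.Icc (0 : ℝ) T, ∀ s : ℝ, deriv (Y t) s ≠ 0) :
    ∀ τ ∈ Set.Icc (0 : ℝ) T, ∀ t ∈ Set.Icc (0 : ℝ) T, τ ≤ t →
      (∫ σ in (0:ℝ)..1, ‖deriv (fun s => ‖deriv (Y t) s‖⁻¹ • deriv (Y t) s) σ‖) ≤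
        ∫ σ in (0:ℝ)..1, ‖deriv (fun s => ‖deriv (Y τ) s‖⁻¹ • deriv (Y τ) s) σ‖ := by
  intro τ hτ t ht hτt
  have hY' : ContDiff ℝ ∞ (Function.uncurry Y) := hY.of_le (by simp)
  exact heat_total_curvature_mono α T hα hT Y hY' hper hheat himm τ hτ t ht hτt
end

section
/- Let d ≥ 1, ε > 0, and let X : (−ε, ε) → ℝ^d be real-analytic with X' not identically zero on any neighborhood of 0. Then both one-sided limits u₊ = lim_{s→0⁺} X'(s)/|X'(s)| and u₋ = lim_{s→0⁻} X'(s)/|X'(s)| exist, and either u₊ = u₋ or u₊ = −u₋. Consequently, a curve whose tangent direction jumps at a point by an angle strictly between 0 and π (a kink) admits no analytic parametrization. -/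
open Real Filter Topology

/-! Near a point `x` where it does not vanish identically, an analytic `f : ℝ → E` factors as
`f s = (s - x) ^ n • g s` with `g x ≠ 0`. The scalar factor only affects the direction of `f s`
through its sign, which is `1` to the right of `x` and `(-1) ^ n` to the left, so the unit
direction `f s / ‖f s‖` tends to `±(g x / ‖g x‖)` on either side. Applied to `f = X'`, this
gives one-sided tangent directions that are equal or opposite. -/

section UnitDirection

variable {E : Type*} [NormedAddCommGroup E] [NormedSpace ℝ E]

lemma norm_inv_smul_pow_smul (t : ℝ) (n : ℕ) (v : E) :
    ‖t ^ n • v‖⁻¹ • (t ^ n • v) = (|t|⁻¹ * t) ^ n • (‖v‖⁻¹ • v) := by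
  rw [norm_smul, norm_pow, Real.norm_eq_abs, smul_smul, smul_smul, mul_pow, inv_pow, mul_inv]
  ring_nf

lemma tendsto_norm_inv_smul_of_eventuallyEq_pow_smul {f g : ℝ → E} {x σ : ℝ} {n : ℕ}
    {l : Filter ℝ} (hl : l ≤ 𝓝 x) (hfg : ∀ᶠ s in 𝓝 x, f s = (s - x) ^ n • g s)
    (hg : ContinuousAt g x) (hgx : g x ≠ 0) (hσ : ∀ᶠ s in l, |s - x|⁻¹ * (s - x) = σ) :
    Tendsto (fun s => ‖f s‖⁻¹ • f s) l (𝓝 (σ ^ n • (‖g x‖⁻¹ • g x))) := by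
  have hdir : ContinuousAt (fun s => ‖g s‖⁻¹ • g s) x :=
    (hg.norm.inv₀ (norm_ne_zero_iff.mpr hgx)).smul hg
  refine ((hdir.tendsto.const_smul (σ ^ n)).mono_left hl).congr' ?_
  filter_upwards [hl hfg, hσ] with s hfs hs
  rw [hfs, norm_inv_smul_pow_smul, hs]

theorem AnalyticAt.exists_tendsto_norm_inv_smul_nhdsGT_nhdsLT {f : ℝ → E} {x : ℝ}
    (hf : AnalyticAt ℝ f x) (hf0 : ¬∀ᶠ s in 𝓝 x, f s = 0) :
    ∃ (n : ℕ) (u : E), Tendsto (fun s => ‖f s‖⁻¹ • f s) (𝓝[>] x) (𝓝 u) ∧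
      Tendsto (fun s => ‖f s‖⁻¹ • f s) (𝓝[<] x) (𝓝 ((-1 : ℝ) ^ n • u)) := by
  obtain ⟨n, g, hg, hgx, hfg⟩ := hf.exists_eventuallyEq_pow_smul_nonzero_iff.mpr hf0
  have hright : ∀ᶠ s in 𝓝[>] x, |s - x|⁻¹ * (s - x) = 1 := by
    filter_upwards [self_mem_nhdsWithin] with s (hs : x < s)
    rw [abs_of_pos (sub_pos.mpr hs), inv_mul_cancel₀ (sub_pos.mpr hs).ne']
  have hleft : ∀ᶠ s in 𝓝[<] x, |s - x|⁻¹ * (s - x) = -1 := by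
    filter_upwards [self_mem_nhdsWithin] with s (hs : s < x)
    rw [abs_of_neg (sub_neg.mpr hs), inv_neg, neg_mul, inv_mul_cancel₀ (sub_neg.mpr hs).ne]
  refine ⟨n, ‖g x‖⁻¹ • g x, ?_, ?_⟩
  · simpa using tendsto_norm_inv_smul_of_eventuallyEq_pow_smul nhdsWithin_le_nhds hfg
      hg.continuousAt hgx hright
  · exact tendsto_norm_inv_smul_of_eventuallyEq_pow_smul nhdsWithin_le_nhds hfg
      hg.continuousAt hgx hleft

end UnitDirection

theorem stmt_10_general (d : ℕ) (ε : ℝ) (hε : 0 < ε)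
    (X : ℝ → EuclideanSpace ℝ (Fin d))
    (hX : AnalyticOnNhd ℝ X (Set.Ioo (-ε) ε))
    (hnz : ∀ δ > (0 : ℝ), ∃ s : ℝ, |s| < δ ∧ deriv X s ≠ 0) :
    ∃ uplus uminus : EuclideanSpace ℝ (Fin d),
      Filter.Tendsto (fun s => ‖deriv X s‖⁻¹ • deriv X s) (nhdsWithin 0 (Set.Ioi 0))
        (nhds uplus) ∧
      Filter.Tendsto (fun s => ‖deriv X s‖⁻¹ • deriv X s) (nhdsWithin 0 (Set.Iio 0))
        (nhds uminus) ∧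
      (uplus = uminus ∨ uplus = -uminus) := by
  have hX' : AnalyticAt ℝ (deriv X) 0 := hX.deriv 0 ⟨neg_lt_zero.mpr hε, hε⟩
  have hX'0 : ¬∀ᶠ s in 𝓝 0, deriv X s = 0 := fun h => by
    obtain ⟨δ, hδ, hzero⟩ := Metric.eventually_nhds_iff.mp h
    obtain ⟨s, hs, hne⟩ := hnz δ hδ
    exact hne (hzero (by simpa [Real.dist_eq] using hs))
  obtain ⟨n, u, hright, hleft⟩ := hX'.exists_tendsto_norm_inv_smul_nhdsGT_nhdsLT hX'0
  refine ⟨u, (-1 : ℝ) ^ n • u, hright, hleft, ?_⟩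
  rcases neg_one_pow_eq_or ℝ n with h | h
  · left; rw [h, one_smul]
  · right; rw [h, neg_one_smul, neg_neg]

/-- For an analytic parametrization, both one-sided limits of the unit tangent
direction at a point exist and are either equal or opposite; hence a kink
(a tangent jump by an angle strictly between 0 and π) is impossible. -/
theorem stmt_10 (d : ℕ) (hd : 1 ≤ d) (ε : ℝ) (hε : 0 < ε)
    (X : ℝ → EuclideanSpace ℝ (Fin d))
    (hX : AnalyticOnNhd ℝ X (Set.Ioo (-ε) ε))
    (hnz : ∀ δ > (0 : ℝ), ∃ s : ℝ, |s| < δ ∧ deriv X s ≠ 0) :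
    ∃ uplus uminus : EuclideanSpace ℝ (Fin d),
      Filter.Tendsto (fun s => ‖deriv X s‖⁻¹ • deriv X s) (nhdsWithin 0 (Set.Ioi 0))
        (nhds uplus) ∧
      Filter.Tendsto (fun s => ‖deriv X s‖⁻¹ • deriv X s) (nhdsWithin 0 (Set.Iio 0))
        (nhds uminus) ∧
      (uplus = uminus ∨ uplus = -uminus) :=
  stmt_10_general d ε hε X hX hnz
end

section
/- Let g : ℝ → ℝ be a continuous 1-periodic function satisfying g(k/8 + s) = (−1)^{k+1} · g(k/8 − s) for all s ∈ ℝ and all k ∈ {1, 2, …, 8}. Then ∫₀¹ g(s)·sin(2πs) ds = 0, ∫₀¹ g(s)·cos(2πs) ds = 0, and ∫₀¹ g(s)·cos(4πs) ds = 0. -/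
open Real

/-- The reflection symmetries of the second component of a doubly symmetric
figure-infinity curve force its first sine and cosine modes and its second cosine
mode to vanish. -/
theorem stmt_15 (g : ℝ → ℝ)
    (hcont : Continuous g)
    (hper : ∀ s : ℝ, g (s + 1) = g s)
    (hsym : ∀ s : ℝ, ∀ k : ℕ, 1 ≤ k → k ≤ 8 →
      g (k / 8 + s) = (-1 : ℝ) ^ (k + 1) * g (k / 8 - s)) :
    (∫ s in (0:ℝ)..1, g s * Real.sin (2 * π * s)) = 0 ∧
    (∫ s in (0:ℝ)..1, g s * Real.cos (2 * π * s)) = 0 ∧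
    (∫ s in (0:ℝ)..1, g s * Real.cos (4 * π * s)) = 0 := by
  -- g is odd
  have hodd : ∀ s : ℝ, g (-s) = -g s := by
    intro s
    have h := hsym s 8 (by norm_num) (le_refl 8)
    have h1 : ((8:ℕ):ℝ) / 8 = 1 := by norm_num
    rw [h1] at h
    have h2 : g (1 + s) = g s := by rw [add_comm]; exact hper s
    have h3 : (1 : ℝ) - s = -s + 1 := by ring
    rw [h2, h3, hper (-s)] at h
    have : ((-1:ℝ)) ^ (8+1) = -1 := by norm_num
    rw [this] at h
    linarith
  -- g has period 1/2
  have hhalf : ∀ s : ℝ, g (s + 1/2) = g s := by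
    intro s
    have h := hsym (s + 1/4) 2 (by norm_num) (by norm_num)
    have h1 : ((2:ℕ):ℝ) / 8 = 1/4 := by norm_num
    rw [h1] at h
    have h2 : (1:ℝ)/4 + (s + 1/4) = s + 1/2 := by ring
    have h3 : (1:ℝ)/4 - (s + 1/4) = -s := by ring
    rw [h2, h3, hodd s] at h
    have : ((-1:ℝ)) ^ (2+1) = -1 := by norm_num
    rw [this] at h
    linarith
  constructor
  · -- sine integral: use period 1/2 of g and antiperiodicity of sin
    have hint : ∀ a b : ℝ, IntervalIntegrable (fun s => g s * Real.sin (2 * π * s)) MeasureTheory.volume a b := by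
      intro a b
      exact (hcont.mul (Real.continuous_sin.comp (by continuity))).intervalIntegrable a b
    have hsplit : (∫ s in (0:ℝ)..1, g s * Real.sin (2 * π * s)) =
        (∫ s in (0:ℝ)..(1/2:ℝ), g s * Real.sin (2 * π * s)) +
        (∫ s in (1/2:ℝ)..1, g s * Real.sin (2 * π * s)) := by
      rw [intervalIntegral.integral_add_adjacent_intervals (hint 0 (1/2)) (hint (1/2) 1)]
    have hshift : (∫ s in (1/2:ℝ)..1, g s * Real.sin (2 * π * s)) =
        ∫ s in (0:ℝ)..(1/2:ℝ), g (s + 1/2) * Real.sin (2 * π * (s + 1/2)) := by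
      rw [intervalIntegral.integral_comp_add_right (fun s => g s * Real.sin (2 * π * s)) (1/2)]
      norm_num
    have heq : ∀ s : ℝ, g (s + 1/2) * Real.sin (2 * π * (s + 1/2)) = -(g s * Real.sin (2 * π * s)) := by
      intro s
      rw [hhalf s]
      have : 2 * π * (s + 1/2) = 2 * π * s + π := by ring
      rw [this, Real.sin_add_pi]
      ring
    rw [hsplit, hshift]
    simp only [heq]
    rw [intervalIntegral.integral_neg]
    ring
  constructor
  · -- cos 2π : odd integrand, shift to symmetric interval
    have hint : ∀ a b : ℝ, IntervalIntegrable (fun s => g s * Real.cos (2 * π * s)) MeasureTheory.volume a b := by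
      intro a b
      exact (hcont.mul (Real.continuous_cos.comp (by continuity))).intervalIntegrable a b
    have hperF : Function.Periodic (fun s => g s * Real.cos (2 * π * s)) 1 := by
      intro s
      simp only
      rw [hper s]
      have : 2 * π * (s + 1) = 2 * π * s + 2 * π := by ring
      rw [this, Real.cos_add_two_pi]
    have h1 : (∫ s in (0:ℝ)..1, g s * Real.cos (2 * π * s)) =
        ∫ s in (-1/2:ℝ)..(-1/2 + 1 : ℝ), g s * Real.cos (2 * π * s) := by
      have := hperF.intervalIntegral_add_eq 0 (-1/2)
      simpa using this
    rw [h1]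
    have h2 : (-1/2 + 1 : ℝ) = 1/2 := by norm_num
    rw [h2]
    have hoddF : ∀ s : ℝ, g (-s) * Real.cos (2 * π * (-s)) = -(g s * Real.cos (2 * π * s)) := by
      intro s
      rw [hodd s]
      have : 2 * π * (-s) = -(2 * π * s) := by ring
      rw [this, Real.cos_neg]
      ring
    have hsplit : (∫ s in (-1/2:ℝ)..(1/2:ℝ), g s * Real.cos (2 * π * s)) =
        (∫ s in (-1/2:ℝ)..(0:ℝ), g s * Real.cos (2 * π * s)) +
        (∫ s in (0:ℝ)..(1/2:ℝ), g s * Real.cos (2 * π * s)) := by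
      rw [intervalIntegral.integral_add_adjacent_intervals (hint (-1/2) 0) (hint 0 (1/2))]
    have hneg : (∫ s in (-1/2:ℝ)..(0:ℝ), g s * Real.cos (2 * π * s)) =
        -(∫ s in (0:ℝ)..(1/2:ℝ), g s * Real.cos (2 * π * s)) := by
      have := intervalIntegral.integral_comp_neg (fun s => g s * Real.cos (2 * π * s)) (a := 0) (b := 1/2)
      simp only [neg_zero, show (-(1/2:ℝ)) = (-1/2:ℝ) by norm_num] at this
      rw [← this]
      simp only [hoddF]
      rw [intervalIntegral.integral_neg]
    rw [hsplit, hneg]; ring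
  · -- cos 4π : odd integrand
    have hint : ∀ a b : ℝ, IntervalIntegrable (fun s => g s * Real.cos (4 * π * s)) MeasureTheory.volume a b := by
      intro a b
      exact (hcont.mul (Real.continuous_cos.comp (by continuity))).intervalIntegrable a b
    have hperF : Function.Periodic (fun s => g s * Real.cos (4 * π * s)) 1 := by
      intro s
      simp only
      rw [hper s]
      have : 4 * π * (s + 1) = 4 * π * s + 2 * π + 2 * π := by ring
      rw [this, Real.cos_add_two_pi, Real.cos_add_two_pi]
    have h1 : (∫ s in (0:ℝ)..1, g s * Real.cos (4 * π * s)) =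
        ∫ s in (-1/2:ℝ)..(-1/2 + 1 : ℝ), g s * Real.cos (4 * π * s) := by
      have := hperF.intervalIntegral_add_eq 0 (-1/2)
      simpa using this
    rw [h1]
    have h2 : (-1/2 + 1 : ℝ) = 1/2 := by norm_num
    rw [h2]
    have hoddF : ∀ s : ℝ, g (-s) * Real.cos (4 * π * (-s)) = -(g s * Real.cos (4 * π * s)) := by
      intro s
      rw [hodd s]
      have : 4 * π * (-s) = -(4 * π * s) := by ring
      rw [this, Real.cos_neg]
      ring
    have hsplit : (∫ s in (-1/2:ℝ)..(1/2:ℝ), g s * Real.cos (4 * π * s)) =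
        (∫ s in (-1/2:ℝ)..(0:ℝ), g s * Real.cos (4 * π * s)) +
        (∫ s in (0:ℝ)..(1/2:ℝ), g s * Real.cos (4 * π * s)) := by
      rw [intervalIntegral.integral_add_adjacent_intervals (hint (-1/2) 0) (hint 0 (1/2))]
    have hneg : (∫ s in (-1/2:ℝ)..(0:ℝ), g s * Real.cos (4 * π * s)) =
        -(∫ s in (0:ℝ)..(1/2:ℝ), g s * Real.cos (4 * π * s)) := by
      have := intervalIntegral.integral_comp_neg (fun s => g s * Real.cos (4 * π * s)) (a := 0) (b := 1/2)
      simp only [neg_zero, show (-(1/2:ℝ)) = (-1/2:ℝ) by norm_num] at this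
      rw [← this]
      simp only [hoddF]
      rw [intervalIntegral.integral_neg]
    rw [hsplit, hneg]; ring
end
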